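/- arXiv:1605.08977 — 9 statements merged into one kernel-verified Lean document; each statement's English description precedes it below -/
import Mathlib

section
/- Let μ > 1 and λ ∈ ℂ with |λ| > 1, and suppose there is no positive integer n with λ = μ^n (non-resonant case). If β : [0,∞) → ℂ is smooth and satisfies β(μx) = λ·β(x) for all x ≥ 0, then β ≡ 0. -/
open Set Filter

theorem stmt0 (μ : ℝ) (hμ : 1 < μ) (lam : ℂ) (hlam : 1 < ‖lam‖)
    (hres : ¬ ∃ n : ℕ, 0 < n ∧ lam = (μ : ℂ) ^ n)
    (β : ℝ → ℂ) (hβ : ContDiffOn ℝ (⊤ : ℕ∞) β (Set.Ici 0))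
    (heq : ∀ x ≥ (0:ℝ), β (μ * x) = lam * β x) :
    ∀ x ≥ (0:ℝ), β x = 0 := by
  have hμ0 : (0:ℝ) < μ := lt_trans one_pos hμ
  have hUD : UniqueDiffOn ℝ (Ici (0:ℝ)) := uniqueDiffOn_Ici 0
  set D : ℕ → ℝ → ℂ := fun k => iteratedDerivWithin k β (Ici 0) with hDdef
  have hdiff : ∀ k : ℕ, ∀ y ∈ Ici (0:ℝ), HasDerivWithinAt (D k) (D (k+1) y) (Ici 0) y := by
    intro k y hy
    have h1 : DifferentiableWithinAt ℝ (D k) (Ici 0) y :=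
      (hβ.differentiableOn_iteratedDerivWithin (by exact_mod_cast ENat.coe_lt_top k) hUD) y hy
    have h2 := h1.hasDerivWithinAt
    have h3 : D (k+1) y = derivWithin (D k) (Ici 0) y := congrFun iteratedDerivWithin_succ y
    rw [h3]
    exact h2
  have maps : MapsTo (fun y : ℝ => μ * y) (Ici 0) (Ici 0) := by
    intro y hy
    exact mul_nonneg hμ0.le hy
  have key : ∀ k : ℕ, ∀ x ∈ Ici (0:ℝ), ((μ:ℂ))^k * D k (μ * x) = lam * D k x := by
    intro k
    induction k with
    | zero =>
      intro x hx
      simpa [hDdef] using heq x hx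
    | succ k ih =>
      intro x hx
      have hmul : HasDerivWithinAt (fun y : ℝ => μ * y) μ (Ici 0) x := by
        simpa using ((hasDerivAt_id x).const_mul μ).hasDerivWithinAt
      have hcomp : HasDerivWithinAt (fun y => D k (μ * y)) (μ • D (k+1) (μ*x)) (Ici 0) x :=
        (hdiff k (μ*x) (maps hx)).scomp x hmul maps
      have hG : HasDerivWithinAt (fun y => ((μ:ℂ))^k * D k (μ * y))
          (((μ:ℂ))^k * (μ • D (k+1) (μ*x))) (Ici 0) x := hcomp.const_mul _
      have hH : HasDerivWithinAt (fun y => lam * D k y) (lam * D (k+1) x) (Ici 0) x :=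
        (hdiff k x hx).const_mul lam
      have hG' : HasDerivWithinAt (fun y => lam * D k y)
          (((μ:ℂ))^k * (μ • D (k+1) (μ*x))) (Ici 0) x := by
        refine hG.congr (fun y hy => (ih y hy).symm) (ih x hx).symm
      have := (hG'.derivWithin (hUD x hx)).symm.trans (hH.derivWithin (hUD x hx))
      rw [Complex.real_smul] at this
      rw [pow_succ]
      calc ((μ:ℂ))^k * (μ:ℂ) * D (k+1) (μ*x) = ((μ:ℂ))^k * ((μ:ℂ) * D (k+1) (μ*x)) := by ring
      _ = lam * D (k+1) x := this
  have hlamne : ∀ k : ℕ, lam ≠ ((μ:ℂ))^k := by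
    intro k hk
    cases k with
    | zero =>
      rw [pow_zero] at hk
      rw [hk, norm_one] at hlam
      exact lt_irrefl _ hlam
    | succ k => exact hres ⟨k+1, Nat.succ_pos _, hk⟩
  have hzero : ∀ k : ℕ, D k 0 = 0 := by
    intro k
    have h := key k 0 Set.self_mem_Ici
    rw [mul_zero] at h
    have h2 : (((μ:ℂ))^k - lam) * D k 0 = 0 := by rw [sub_mul, h]; ring
    rcases mul_eq_zero.1 h2 with h3 | h3
    · exact absurd (sub_eq_zero.1 h3).symm (hlamne k)
    · exact h3
  intro b hb
  rcases eq_or_lt_of_le hb with hb0 | hb0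
  · have := hzero 0
    simpa [hDdef, ← hb0] using this
  · -- b > 0
    obtain ⟨n, hn⟩ : ∃ n : ℕ, ‖lam‖ < μ ^ n := pow_unbounded_of_one_lt _ hμ
    have hμn1 : (0:ℝ) < μ ^ (n+1) := pow_pos hμ0 _
    have hn' : ‖lam‖ < μ ^ (n+1) := hn.trans_le (pow_le_pow_right₀ hμ.le (Nat.le_succ n))
    have hβs : ContDiffOn ℝ (n+1 : ℕ) β (Icc 0 b) :=
      (hβ.of_le (by exact_mod_cast le_top)).mono (Icc_subset_Ici_self)
    obtain ⟨C, hC⟩ := exists_taylor_mean_remainder_bound hb (by exact_mod_cast hβs)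
    have hsets : Icc (0:ℝ) b =ᶠ[nhds (0:ℝ)] Ici (0:ℝ) := by
      rw [Filter.eventuallyEq_set]
      filter_upwards [Ioo_mem_nhds (neg_lt_zero.2 hb0) hb0] with x hx
      constructor
      · exact fun h => h.1
      · exact fun h => ⟨h, hx.2.le⟩
    have hDcongr : ∀ k : ℕ, iteratedDerivWithin k β (Icc 0 b) 0 = 0 := by
      intro k
      rw [iteratedDerivWithin_eq_iteratedFDerivWithin,
        iteratedFDerivWithin_congr_set hsets k,
        ← iteratedDerivWithin_eq_iteratedFDerivWithin]
      exact hzero k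
    have htay : ∀ y : ℝ, taylorWithinEval β n (Icc 0 b) 0 y = 0 := by
      intro y
      rw [taylor_within_apply]
      apply Finset.sum_eq_zero
      intro k _
      rw [hDcongr k, smul_zero]
    have hbound : ∀ y ∈ Icc (0:ℝ) b, ‖β y‖ ≤ C * y ^ (n+1) := by
      intro y hy
      have := hC y hy
      rwa [htay, sub_zero, sub_zero] at this
    have hit : ∀ m : ℕ, β b = lam ^ m * β (b / μ ^ m) := by
      intro m
      induction m with
      | zero => simp
      | succ m ih =>
        have hpos : (0:ℝ) ≤ b / μ ^ (m+1) := le_of_lt (div_pos hb0 (pow_pos hμ0 _))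
        have h1 := heq (b / μ ^ (m+1)) hpos
        have h2 : μ * (b / μ ^ (m+1)) = b / μ ^ m := by
          field_simp
          ring
        rw [h2] at h1
        rw [ih, h1, pow_succ]
        ring
    have hmem : ∀ m : ℕ, b / μ ^ m ∈ Icc (0:ℝ) b := by
      intro m
      have h1 : (0:ℝ) < μ ^ m := pow_pos hμ0 _
      have h2 : (1:ℝ) ≤ μ ^ m := one_le_pow₀ hμ.le
      constructor
      · exact le_of_lt (div_pos hb0 h1)
      · exact div_le_self hb0.le h2
    have hfin : ∀ m : ℕ, ‖β b‖ ≤ (C * b ^ (n+1)) * (‖lam‖ / μ ^ (n+1)) ^ m := by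
      intro m
      rw [hit m, norm_mul, norm_pow]
      have h1 : ‖β (b / μ ^ m)‖ ≤ C * (b / μ ^ m) ^ (n+1) := hbound _ (hmem m)
      calc ‖lam‖ ^ m * ‖β (b / μ ^ m)‖ ≤ ‖lam‖ ^ m * (C * (b / μ ^ m) ^ (n+1)) := by
            exact mul_le_mul_of_nonneg_left h1 (pow_nonneg (norm_nonneg _) m)
        _ = (C * b ^ (n+1)) * (‖lam‖ / μ ^ (n+1)) ^ m := by
            rw [div_pow, div_pow, ← pow_mul, ← pow_mul, Nat.mul_comm m (n+1)]
            have : (0:ℝ) < μ ^ ((n+1) * m) := pow_pos hμ0 _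
            field_simp
    have hr1 : (0:ℝ) ≤ ‖lam‖ / μ ^ (n+1) := div_nonneg (norm_nonneg _) hμn1.le
    have hr2 : ‖lam‖ / μ ^ (n+1) < 1 := (div_lt_one hμn1).2 hn'
    have hlim : Tendsto (fun m : ℕ => (C * b ^ (n+1)) * (‖lam‖ / μ ^ (n+1)) ^ m)
        atTop (nhds 0) := by
      have := (tendsto_pow_atTop_nhds_zero_of_lt_one hr1 hr2).const_mul (C * b ^ (n+1))
      simpa using this
    have : ‖β b‖ ≤ 0 := ge_of_tendsto' hlim hfin
    exact norm_le_zero_iff.1 this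
end

section
/- Let μ > 1 and λ = μ^n for some positive integer n (resonant case). The set of smooth functions β : [0,∞) → ℂ satisfying β(μx) = λ·β(x) for all x ≥ 0 is exactly {c·x^n : c ∈ ℂ}; in particular it is a complex vector space of dimension 1. -/
open Set

private lemma natcast_lt_top' (k : ℕ) : (k : WithTop ℕ∞) < ((⊤ : ℕ∞) : WithTop ℕ∞) := by
  exact_mod_cast ENat.coe_lt_top k

private lemma mono_hasDerivAt (c : ℂ) (m : ℕ) (x : ℝ) :
    HasDerivAt (fun x : ℝ => c * (x : ℂ) ^ m) (c * (m * (x : ℂ) ^ (m - 1))) x :=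
  ((hasDerivAt_pow m (x : ℂ)).comp_ofReal).const_mul c

private lemma iter_monomial (n : ℕ) (c : ℂ) :
    ∀ k, k ≤ n → ∀ x ∈ Ici (0:ℝ),
      iteratedDerivWithin k (fun x : ℝ => c * (x:ℂ) ^ n) (Ici 0) x
        = c * (n.descFactorial k) * (x:ℂ) ^ (n - k) := by
  intro k
  induction k with
  | zero => intro _ x _; simp
  | succ k IH =>
    intro hk x hx
    have U := uniqueDiffOn_Ici (0:ℝ)
    rw [iteratedDerivWithin_succ]
    have hk' : k ≤ n := le_of_lt (Nat.lt_of_succ_le hk)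
    have heq : Set.EqOn (iteratedDerivWithin k (fun x : ℝ => c * (x:ℂ) ^ n) (Ici 0))
        (fun x : ℝ => c * (n.descFactorial k) * (x:ℂ) ^ (n - k)) (Ici 0) :=
      fun y hy => IH hk' y hy
    rw [derivWithin_congr heq (heq hx)]
    have hd := (mono_hasDerivAt (c * (n.descFactorial k)) (n - k) x).hasDerivWithinAt
      (s := Ici (0:ℝ))
    rw [hd.derivWithin (U.uniqueDiffWithinAt hx)]
    have h1 : n - k - 1 = n - (k+1) := by omega
    have h2 : ((n.descFactorial (k+1) : ℕ) : ℂ) = (n.descFactorial k) * ((n - k : ℕ) : ℂ) := by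
      rw [Nat.descFactorial_succ]; push_cast; ring
    rw [h1, h2]; ring

private lemma iter_scale (μ : ℝ) (hμ : 0 < μ) (β : ℝ → ℂ)
    (hβ : ContDiffOn ℝ (⊤ : ℕ∞) β (Ici 0)) :
    ∀ k : ℕ, ∀ x ∈ Ici (0:ℝ),
      iteratedDerivWithin k (fun y => β (μ * y)) (Ici 0) x
        = μ ^ k • iteratedDerivWithin k β (Ici 0) (μ * x) := by
  intro k
  induction k with
  | zero => intro x _; simp
  | succ k IH =>
    intro x hx
    have U := uniqueDiffOn_Ici (0:ℝ)
    have hmem : μ * x ∈ Ici (0:ℝ) := mul_nonneg hμ.le hx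
    rw [iteratedDerivWithin_succ]
    have heq : Set.EqOn (iteratedDerivWithin k (fun y => β (μ * y)) (Ici 0))
        (fun y => μ ^ k • iteratedDerivWithin k β (Ici 0) (μ * y)) (Ici 0) :=
      fun y hy => IH y hy
    rw [derivWithin_congr heq (heq hx)]
    have hdiff : HasDerivWithinAt (iteratedDerivWithin k β (Ici 0))
        (iteratedDerivWithin (k+1) β (Ici 0) (μ * x)) (Ici 0) (μ * x) := by
      have h := ((hβ.differentiableOn_iteratedDerivWithin (natcast_lt_top' k) U)
        (μ * x) hmem).hasDerivWithinAt
      rwa [← iteratedDerivWithin_succ] at h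
    have hmul : HasDerivWithinAt (fun y : ℝ => μ * y) μ (Ici 0) x := by
      simpa using ((hasDerivAt_id x).const_mul μ).hasDerivWithinAt (s := Ici (0:ℝ))
    have hcomp : HasDerivWithinAt (fun y => iteratedDerivWithin k β (Ici 0) (μ * y))
        (μ • iteratedDerivWithin (k+1) β (Ici 0) (μ * x)) (Ici 0) x :=
      hdiff.scomp x hmul (fun y hy => mul_nonneg hμ.le hy)
    rw [(hcomp.fun_const_smul (μ ^ k)).derivWithin (U.uniqueDiffWithinAt hx)]
    rw [smul_smul, pow_succ]

theorem stmt1 (μ : ℝ) (hμ : 1 < μ) (n : ℕ) (hn : 0 < n) (lam : ℂ)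
    (hlam : lam = (μ : ℂ) ^ n) (β : ℝ → ℂ) :
    (ContDiffOn ℝ (⊤ : ℕ∞) β (Set.Ici 0) ∧ ∀ x ≥ (0:ℝ), β (μ * x) = lam * β x) ↔
      ∃ c : ℂ, ∀ x ≥ (0:ℝ), β x = c * (x : ℂ) ^ n := by
  have hμ0 : (0:ℝ) < μ := lt_trans one_pos hμ
  have hmonoCD : ∀ c : ℂ, ContDiff ℝ (⊤ : ℕ∞) (fun x : ℝ => c * (x:ℂ) ^ n) := by
    intro c
    have h1 : ContDiff ℝ (⊤ : ℕ∞) (fun x : ℝ => (x:ℂ)) := Complex.ofRealCLM.contDiff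
    exact contDiff_const.mul (h1.pow n)
  constructor
  · rintro ⟨hβ, hfe⟩
    have U : UniqueDiffOn ℝ (Ici (0:ℝ)) := uniqueDiffOn_Ici 0
    have h0 : (0:ℝ) ∈ Ici (0:ℝ) := self_mem_Ici
    -- differentiated functional equation at 0
    have hDk : ∀ k : ℕ, ((μ ^ k : ℝ) : ℂ) * iteratedDerivWithin k β (Ici 0) 0
        = lam * iteratedDerivWithin k β (Ici 0) 0 := by
      intro k
      have heq : Set.EqOn (fun y => β (μ * y)) (lam • β) (Ici (0:ℝ)) := by
        intro y hy
        simpa using hfe y hy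
      have h1 := iteratedDerivWithin_congr heq (n := k) h0
      rw [iter_scale μ hμ0 β hβ k 0 h0,
        iteratedDerivWithin_const_smul h0 U lam ((hβ.of_le (by exact_mod_cast le_top)) 0 h0)] at h1
      rw [mul_zero] at h1
      simpa [Complex.real_smul, smul_eq_mul] using h1
    have hzero : ∀ k : ℕ, k ≠ n → iteratedDerivWithin k β (Ici 0) 0 = 0 := by
      intro k hk
      have h1 := hDk k
      have h2 : ((μ ^ k : ℝ) : ℂ) ≠ lam := by
        rw [hlam]
        push_cast
        intro h
        have : (μ:ℂ) ^ k = (μ:ℂ) ^ n := by exact_mod_cast h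
        have hre : μ ^ k = μ ^ n := by exact_mod_cast this
        have : StrictMono (fun m : ℕ => μ ^ m) := fun a b hab => pow_lt_pow_right₀ hμ hab
        exact hk (this.injective hre)
      by_contra h3
      exact h2 (mul_right_cancel₀ h3 h1)
    set c : ℂ := iteratedDerivWithin n β (Ici 0) 0 / (n.factorial : ℂ) with hc
    refine ⟨c, ?_⟩
    set m : ℝ → ℂ := fun x : ℝ => c * (x:ℂ) ^ n with hm
    set g : ℝ → ℂ := β - m with hgdef
    have hmCD : ContDiffOn ℝ (⊤ : ℕ∞) m (Ici (0:ℝ)) := (hmonoCD c).contDiffOn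
    have hg : ContDiffOn ℝ (⊤ : ℕ∞) g (Ici (0:ℝ)) := hβ.sub hmCD
    -- vanishing derivatives of g at 0 up to order n
    have hgd : ∀ k : ℕ, k ≤ n → iteratedDerivWithin k g (Ici 0) 0 = 0 := by
      intro k hk
      have hsub := iteratedDerivWithin_sub h0 U ((hβ.of_le (by exact_mod_cast le_top)) 0 h0) ((hmCD.of_le (by exact_mod_cast le_top)) 0 h0)
        (n := k)
      rw [hgdef, hsub, iter_monomial n c k hk 0 h0]
      rcases eq_or_lt_of_le hk with h | h
      · subst h
        have hfac : ((k.factorial : ℕ) : ℂ) ≠ 0 := by exact_mod_cast k.factorial_ne_zero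
        rw [Nat.descFactorial_self, Nat.sub_self, pow_zero, mul_one, hc,
          div_mul_cancel₀ _ hfac, sub_self]
      · rw [hzero k (Nat.ne_of_lt h), Complex.ofReal_zero, zero_pow (by omega), mul_zero,
          zero_sub, neg_eq_zero]
    -- functional equation for g
    have hfeg : ∀ x : ℝ, 0 ≤ x → g (μ * x) = lam * g x := by
      intro x hx
      have : m (μ * x) = lam * m x := by
        rw [hm, hlam]
        push_cast
        ring
      simp only [hgdef, Pi.sub_apply, hfe x hx, this]
      ring
    -- bound on [0,1]
    obtain ⟨M, hM⟩ := isCompact_Icc.exists_bound_of_continuousOn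
      ((hg.continuousOn_iteratedDerivWithin (m := n + 1) (by exact_mod_cast le_top) U).mono
        (Icc_subset_Ici_self : Icc (0:ℝ) 1 ⊆ Ici 0))
    have hM0 : 0 ≤ M := le_trans (norm_nonneg _) (hM 0 ⟨le_refl _, zero_le_one⟩)
    have key : ∀ i : ℕ, i ≤ n + 1 → ∀ t ∈ Icc (0:ℝ) 1,
        ‖iteratedDerivWithin (n + 1 - i) g (Ici 0) t‖ ≤ M * t ^ i := by
      intro i
      induction i with
      | zero => intro _ t ht; simpa using hM t ht
      | succ i IH =>
        intro hi t ht
        have hi' : i ≤ n + 1 := by omega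
        have hj : n + 1 - i = (n - i) + 1 := by omega
        have hcont : ContinuousOn (iteratedDerivWithin (n - i) g (Ici 0)) (Icc (0:ℝ) 1) :=
          (hg.continuousOn_iteratedDerivWithin (natcast_lt_top' (n - i)).le U).mono Icc_subset_Ici_self
        have hderiv : ∀ x ∈ Ico (0:ℝ) 1,
            HasDerivWithinAt (iteratedDerivWithin (n - i) g (Ici 0))
              (iteratedDerivWithin (n - i + 1) g (Ici 0) x) (Ici x) x := by
          intro x hx
          have hxs : x ∈ Ici (0:ℝ) := hx.1
          have h := ((hg.differentiableOn_iteratedDerivWithin (natcast_lt_top' (n - i)) U)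
            x hxs).hasDerivWithinAt
          rw [← iteratedDerivWithin_succ] at h
          exact h.mono (Ici_subset_Ici.2 hx.1)
        have hB : ∀ x : ℝ, HasDerivAt (fun t : ℝ => M * t ^ (i + 1))
            (M * ((i + 1) * x ^ i)) x := by
          intro x
          simpa using (hasDerivAt_pow (i + 1) x).const_mul M
        have hbound : ∀ x ∈ Ico (0:ℝ) 1,
            ‖iteratedDerivWithin (n - i + 1) g (Ici 0) x‖ ≤ M * ((i + 1) * x ^ i) := by
          intro x hx
          have h1 := IH hi' x ⟨hx.1, hx.2.le⟩
          rw [hj] at h1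
          have hxp : (0:ℝ) ≤ x ^ i := pow_nonneg hx.1 i
          nlinarith [mul_nonneg hM0 hxp]
        have ha : ‖iteratedDerivWithin (n - i) g (Ici 0) 0‖ ≤ M * 0 ^ (i + 1) := by
          rw [hgd (n - i) (by omega)]
          simp
        have := image_norm_le_of_norm_deriv_right_le_deriv_boundary
          hcont hderiv ha hB hbound ht
        have hidx : n + 1 - (i + 1) = n - i := by omega
        rw [hidx]
        exact this
    have hfinal : ∀ t ∈ Icc (0:ℝ) 1, ‖g t‖ ≤ M * t ^ (n + 1) := by
      intro t ht
      have := key (n + 1) le_rfl t ht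
      simpa using this
    -- scaling
    have hiter : ∀ (k : ℕ) (y : ℝ), 0 ≤ y → g (μ ^ k * y) = lam ^ k * g y := by
      intro k
      induction k with
      | zero => intro y _; simp
      | succ k IH =>
        intro y hy
        have h1 : μ ^ (k + 1) * y = μ * (μ ^ k * y) := by ring
        rw [h1, hfeg _ (mul_nonneg (pow_nonneg hμ0.le k) hy), IH y hy]
        ring
    have hnormlam : ‖lam‖ = μ ^ n := by
      rw [hlam]
      simp [norm_pow, Complex.norm_real, abs_of_pos hμ0]
    -- conclude g = 0 on [0, ∞)
    intro x hx
    have hgx : g x = 0 := by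
      obtain ⟨k₀, hk₀⟩ := pow_unbounded_of_one_lt x hμ
      have hbd : ∀ k : ℕ, k₀ ≤ k → ‖g x‖ ≤ (M * x ^ (n + 1)) * (1 / μ) ^ k := by
        intro k hk
        have hpk : (0:ℝ) < μ ^ k := pow_pos hμ0 k
        have hxk : x / μ ^ k ∈ Icc (0:ℝ) 1 := by
          constructor
          · positivity
          · rw [div_le_one hpk]
            calc x ≤ μ ^ k₀ := hk₀.le
              _ ≤ μ ^ k := pow_le_pow_right₀ hμ.le hk
        have hxeq : x = μ ^ k * (x / μ ^ k) := by field_simp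
        have h1 : g x = lam ^ k * g (x / μ ^ k) := by
          conv_lhs => rw [hxeq]
          exact hiter k _ (div_nonneg hx hpk.le)
        have h2 : ‖g x‖ = (μ ^ n) ^ k * ‖g (x / μ ^ k)‖ := by
          rw [h1, norm_mul, norm_pow, hnormlam]
        have h3 : ‖g (x / μ ^ k)‖ ≤ M * (x / μ ^ k) ^ (n + 1) := hfinal _ hxk
        have h4 : (μ ^ n) ^ k * (M * (x / μ ^ k) ^ (n + 1))
            = (M * x ^ (n + 1)) * (1 / μ) ^ k := by
          have hk' : (μ ^ k) ^ (n + 1) = (μ ^ n) ^ k * μ ^ k := by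
            rw [← pow_mul, ← pow_mul, ← pow_add]; ring_nf
          rw [div_pow, hk', one_div_pow]
          field_simp
        rw [h2, ← h4]
        have : (0:ℝ) ≤ (μ ^ n) ^ k := by positivity
        nlinarith [h3, this]
      have htend : Filter.Tendsto (fun k : ℕ => (M * x ^ (n + 1)) * (1 / μ) ^ k)
          Filter.atTop (nhds 0) := by
        have h1 : (0:ℝ) ≤ 1 / μ := by positivity
        have h2 : 1 / μ < 1 := by
          rw [div_lt_one hμ0]; exact hμ
        have := (tendsto_pow_atTop_nhds_zero_of_lt_one h1 h2).const_mul (M * x ^ (n + 1))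
        simpa using this
      have hle : ‖g x‖ ≤ 0 := by
        refine ge_of_tendsto htend ?_
        filter_upwards [Filter.eventually_atTop.2 ⟨k₀, fun k hk => hbd k hk⟩] with k hk
        exact hk
      simpa using le_antisymm hle (norm_nonneg _)
    have := sub_eq_zero.mp (by simpa [hgdef, Pi.sub_apply] using hgx)
    exact this
  · rintro ⟨c, hc⟩
    refine ⟨(hmonoCD c).contDiffOn.congr fun x hx => hc x hx, ?_⟩
    intro x hx
    rw [hc x hx, hc (μ * x) (mul_nonneg hμ0.le hx), hlam]
    push_cast
    ring
end

section
/- Let μ > 1, λ = μ^n with n ∈ ℕ, n ≥ 1. If (β₁, β₂) is a pair of smooth functions [0,∞) → ℂ satisfying β₁(μx) = λβ₁(x) and β₂(μx) = λβ₂(x) + β₁(x) for all x ≥ 0, then β₁ ≡ 0 and β₂(x) = c·x^n for some constant c ∈ ℂ. -/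
open Set Filter Topology

private lemma key (μ : ℝ) (hμ : 1 < μ) :
    ∀ m : ℕ, ∀ f : ℝ → ℂ, ContDiffOn ℝ (⊤ : ℕ∞) f (Set.Ici 0) →
    ∀ b : ℂ, (∀ x ≥ (0:ℝ), f (μ * x) = (μ:ℂ)^m * f x + b * (x:ℂ)^m) →
    b = 0 ∧ ∃ c : ℂ, ∀ x ≥ (0:ℝ), f x = c * (x:ℂ)^m := by
  have hμ0 : (0:ℝ) < μ := lt_trans one_pos hμ
  have hμc : (μ:ℂ) ≠ 0 := by exact_mod_cast hμ0.ne'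
  have hU : UniqueDiffOn ℝ (Set.Ici (0:ℝ)) := uniqueDiffOn_Ici 0
  intro m
  induction m with
  | zero =>
    intro f hf b hfe
    have hb : b = 0 := by
      have h0 := hfe 0 le_rfl
      simpa using h0
    refine ⟨hb, f 0, ?_⟩
    intro x hx
    have hiter : ∀ k : ℕ, f x = f (x / μ ^ k) := by
      intro k
      induction k with
      | zero => simp
      | succ k ih =>
        have hx' : x / μ ^ (k+1) ≥ 0 := div_nonneg hx (by positivity)
        have h := hfe (x / μ^(k+1)) hx'
        rw [hb] at h
        simp only [pow_zero, one_mul, zero_mul, add_zero] at h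
        have harg : μ * (x / μ^(k+1)) = x / μ^k := by
          field_simp
          ring
        rw [harg] at h
        rw [ih, h]
    have hlim : Tendsto (fun k : ℕ => x / μ ^ k) atTop (nhds 0) := by
      have h1 : Tendsto (fun k : ℕ => (1/μ) ^ k) atTop (nhds 0) :=
        tendsto_pow_atTop_nhds_zero_of_lt_one (by positivity)
          (by rw [div_lt_one hμ0]; exact hμ)
      have h2 := h1.const_mul x
      simpa [div_eq_mul_inv, mul_pow] using h2
    have hmem : ∀ k : ℕ, x / μ ^ k ∈ Set.Ici (0:ℝ) :=
      fun k => div_nonneg hx (by positivity)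
    have hcont : ContinuousWithinAt f (Set.Ici 0) 0 :=
      (hf.continuousOn) 0 Set.self_mem_Ici
    have hT : Tendsto (fun k => f (x / μ ^ k)) atTop (nhds (f 0)) :=
      hcont.tendsto.comp
        (tendsto_nhdsWithin_of_tendsto_nhds_of_eventually_within _ hlim
          (Filter.Eventually.of_forall hmem))
    have heq : (fun k => f (x / μ ^ k)) = fun _ => f x :=
      funext fun k => (hiter k).symm
    rw [heq] at hT
    have := tendsto_nhds_unique tendsto_const_nhds hT
    simpa using this
  | succ m ih =>
    intro f hf b hfe
    set g := derivWithin f (Set.Ici 0) with hg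
    have hgd : ContDiffOn ℝ (⊤ : ℕ∞) g (Set.Ici 0) := hf.derivWithin hU (by simp)
    have hne : ((μ:ℂ))^(m+1) ≠ 1 := by
      intro hcon
      have h1 : ((μ:ℝ)^(m+1) : ℂ) = ((1:ℝ) : ℂ) := by push_cast; exact_mod_cast hcon
      have h2 : (μ:ℝ)^(m+1) = 1 := by exact_mod_cast h1
      have h3 : (1:ℝ) < μ ^ (m+1) := one_lt_pow₀ hμ (Nat.succ_ne_zero m)
      linarith
    have hf0 : f 0 = 0 := by
      have h0 := hfe 0 le_rfl
      simp only [mul_zero, Complex.ofReal_zero, zero_pow (Nat.succ_ne_zero m), add_zero] at h0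
      have h1 : ((μ:ℂ)^(m+1) - 1) * f 0 = 0 := by linear_combination -h0
      rcases mul_eq_zero.mp h1 with h | h
      · exact absurd (sub_eq_zero.mp h) hne
      · exact h
    have hfd : ∀ y ∈ Set.Ici (0:ℝ), HasDerivWithinAt f (g y) (Set.Ici 0) y := by
      intro y hy
      exact ((hf.differentiableOn (by simp)) y hy).hasDerivWithinAt
    have hmaps : Set.MapsTo (fun y : ℝ => μ * y) (Set.Ici 0) (Set.Ici 0) :=
      fun y hy => mul_nonneg hμ0.le hy
    have hderiv : ∀ x ≥ (0:ℝ),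
        (μ:ℂ) * g (μ * x) = (μ:ℂ)^(m+1) * g x + ((m:ℂ)+1) * b * (x:ℂ)^m := by
      intro x hx
      have hxI : x ∈ Set.Ici (0:ℝ) := hx
      have hmx : μ * x ∈ Set.Ici (0:ℝ) := mul_nonneg hμ0.le hx
      have hid : HasDerivWithinAt (fun y : ℝ => μ * y) μ (Set.Ici 0) x := by
        simpa using ((hasDerivAt_id x).const_mul μ).hasDerivWithinAt
      have hL : HasDerivWithinAt (fun y => f (μ * y)) (μ • g (μ * x)) (Set.Ici 0) x :=
        (hfd _ hmx).scomp x hid hmaps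
      have hpow : HasDerivWithinAt (fun y : ℝ => ((y:ℂ))^(m+1))
          (((m:ℂ)+1) * (x:ℂ)^m) (Set.Ici 0) x := by
        have h1 : HasDerivAt (fun w : ℂ => w^(m+1)) (((m+1 : ℕ) : ℂ) * (x:ℂ)^m) (x:ℂ) :=
          hasDerivAt_pow (m+1) (x:ℂ)
        have h2 := h1.comp_ofReal
        have h3 : (((m+1 : ℕ) : ℂ)) = ((m:ℂ)+1) := by push_cast; ring
        rw [h3] at h2
        exact h2.hasDerivWithinAt
      have hR : HasDerivWithinAt (fun y : ℝ => (μ:ℂ)^(m+1) * f y + b * ((y:ℂ))^(m+1))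
          ((μ:ℂ)^(m+1) * g x + b * (((m:ℂ)+1) * (x:ℂ)^m)) (Set.Ici 0) x :=
        ((hfd x hxI).const_mul ((μ:ℂ)^(m+1))).add (hpow.const_mul b)
      have hFG : HasDerivWithinAt (fun y => f (μ * y))
          ((μ:ℂ)^(m+1) * g x + b * (((m:ℂ)+1) * (x:ℂ)^m)) (Set.Ici 0) x :=
        hR.congr (fun y hy => hfe y hy) (hfe x hx)
      have e1 := hL.derivWithin (hU x hxI)
      have e2 := hFG.derivWithin (hU x hxI)
      rw [e2] at e1
      have : (μ:ℂ)^(m+1) * g x + b * (((m:ℂ)+1) * (x:ℂ)^m) = μ • g (μ * x) := e1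
      rw [show (μ • g (μ * x)) = (μ:ℂ) * g (μ * x) from by
        rw [Complex.real_smul]] at this
      linear_combination -this
    have hge : ∀ x ≥ (0:ℝ),
        g (μ * x) = (μ:ℂ)^m * g x + (((m:ℂ)+1) * b / μ) * (x:ℂ)^m := by
      intro x hx
      apply mul_left_cancel₀ hμc
      rw [hderiv x hx]
      field_simp
      ring
    obtain ⟨hb', c, hc⟩ := ih g hgd _ hge
    have hm1 : ((m:ℂ)+1) ≠ 0 := Nat.cast_add_one_ne_zero m
    have hb : b = 0 := by
      have h1 : ((m:ℂ)+1) * b = 0 := by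
        field_simp at hb'
        rwa [mul_zero] at hb'
      rcases mul_eq_zero.mp h1 with h | h
      · exact absurd h hm1
      · exact h
    refine ⟨hb, c / ((m:ℂ)+1), ?_⟩
    intro x hx
    set h := fun y : ℝ => f y - (c / ((m:ℂ)+1)) * (y:ℂ)^(m+1) with hh
    have hder : ∀ y ∈ Set.Ici (0:ℝ), HasDerivWithinAt h 0 (Set.Ici 0) y := by
      intro y hy
      have hpow : HasDerivWithinAt (fun t : ℝ => (c / ((m:ℂ)+1)) * ((t:ℂ))^(m+1))
          ((c / ((m:ℂ)+1)) * (((m:ℂ)+1) * (y:ℂ)^m)) (Set.Ici 0) y := by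
        have h1 : HasDerivAt (fun w : ℂ => w^(m+1)) (((m+1 : ℕ) : ℂ) * (y:ℂ)^m) (y:ℂ) :=
          hasDerivAt_pow (m+1) (y:ℂ)
        have h2 := h1.comp_ofReal
        have h3 : (((m+1 : ℕ) : ℂ)) = ((m:ℂ)+1) := by push_cast; ring
        rw [h3] at h2
        exact (h2.hasDerivWithinAt).const_mul _
      have := (hfd y hy).sub hpow
      refine this.congr_deriv ?_
      rw [hc y hy]
      field_simp
      ring
    have hdiff : DifferentiableOn ℝ h (Set.Ici 0) :=
      fun y hy => (hder y hy).differentiableWithinAt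
    have hbound : ∀ y ∈ Set.Ici (0:ℝ), ‖derivWithin h (Set.Ici 0) y‖ ≤ 0 := by
      intro y hy
      rw [(hder y hy).derivWithin (hU y hy)]
      simp
    have hkey := Convex.norm_image_sub_le_of_norm_derivWithin_le hdiff hbound
      (convex_Ici (0:ℝ)) Set.self_mem_Ici hx
    simp only [zero_mul] at hkey
    have hx0 : h x = h 0 := by
      have := norm_sub_eq_zero_iff.mp (le_antisymm hkey (norm_nonneg _))
      exact this
    have h00 : h 0 = 0 := by
      simp [hh, hf0, zero_pow (Nat.succ_ne_zero m)]
    rw [h00] at hx0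
    have : f x = (c / ((m:ℂ)+1)) * (x:ℂ)^(m+1) := by
      have := sub_eq_zero.mp hx0
      exact this
    exact this

theorem stmt3 (μ : ℝ) (hμ : 1 < μ) (n : ℕ) (hn : 1 ≤ n) (lam : ℂ)
    (hlam : lam = (μ : ℂ) ^ n)
    (β₁ β₂ : ℝ → ℂ)
    (h1 : ContDiffOn ℝ (⊤ : ℕ∞) β₁ (Set.Ici 0)) (h2 : ContDiffOn ℝ (⊤ : ℕ∞) β₂ (Set.Ici 0))
    (e1 : ∀ x ≥ (0:ℝ), β₁ (μ * x) = lam * β₁ x)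
    (e2 : ∀ x ≥ (0:ℝ), β₂ (μ * x) = lam * β₂ x + β₁ x) :
    (∀ x ≥ (0:ℝ), β₁ x = 0) ∧ ∃ c : ℂ, ∀ x ≥ (0:ℝ), β₂ x = c * (x : ℂ) ^ n := by
  obtain ⟨-, a, ha⟩ := key μ hμ n β₁ h1 0
    (by intro x hx; rw [e1 x hx, hlam]; ring)
  obtain ⟨ha0, c, hc⟩ := key μ hμ n β₂ h2 a
    (by intro x hx; rw [e2 x hx, hlam, ha x hx])
  refine ⟨fun x hx => by rw [ha x hx, ha0, zero_mul], c, hc⟩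
end

section
/- Let φ : [0,∞) → [0,∞) be a smooth diffeomorphism with φ(x) > x for all x > 0 and φ'(0) = 1, and let λ ∈ ℂ with |λ| > 1. If β : [0,∞) → ℂ is smooth and satisfies β(φ(x)) = λ·β(x) for all x ≥ 0, then β(0) = 0 and β'(0) = 0 (one-sided derivative). -/
open Set

theorem stmt4 (φ : ℝ → ℝ) (hφs : ContDiffOn ℝ (⊤ : ℕ∞) φ (Set.Ici 0))
    (hbij : Set.BijOn φ (Set.Ici 0) (Set.Ici 0)) (hφ0 : φ 0 = 0)
    (hinv : ∃ ψ : ℝ → ℝ, ContDiffOn ℝ (⊤ : ℕ∞) ψ (Set.Ici 0) ∧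
      ∀ x ∈ Set.Ici (0:ℝ), ψ (φ x) = x ∧ φ (ψ x) = x)
    (hexp : ∀ x > (0:ℝ), φ x > x)
    (hd : derivWithin φ (Set.Ici 0) 0 = 1)
    (lam : ℂ) (hlam : 1 < ‖lam‖)
    (β : ℝ → ℂ) (hβ : ContDiffOn ℝ (⊤ : ℕ∞) β (Set.Ici 0))
    (heq : ∀ x ≥ (0:ℝ), β (φ x) = lam * β x) :
    β 0 = 0 ∧ derivWithin β (Set.Ici 0) 0 = 0 := by
  have hlam1 : lam ≠ 1 := by
    intro h; rw [h] at hlam; simp at hlam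
  have h0mem : (0:ℝ) ∈ Set.Ici (0:ℝ) := self_mem_Ici
  have hu : UniqueDiffWithinAt ℝ (Set.Ici (0:ℝ)) 0 := uniqueDiffOn_Ici 0 0 h0mem
  have hβ0 : β 0 = 0 := by
    have h := heq 0 le_rfl
    rw [hφ0] at h
    have : (lam - 1) * β 0 = 0 := by linear_combination -h
    rcases mul_eq_zero.1 this with h' | h'
    · exact absurd (sub_eq_zero.1 h') hlam1
    · exact h'
  refine ⟨hβ0, ?_⟩
  set b' := derivWithin β (Set.Ici 0) 0 with hb'
  have hβd : HasDerivWithinAt β b' (Set.Ici 0) 0 :=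
    ((hβ.differentiableOn (by simp)) 0 h0mem).hasDerivWithinAt
  have hφd : HasDerivWithinAt φ 1 (Set.Ici 0) 0 := by
    have := ((hφs.differentiableOn (by simp)) 0 h0mem).hasDerivWithinAt
    rwa [hd] at this
  have hβd' : HasDerivWithinAt β b' (Set.Ici 0) (φ 0) := by rwa [hφ0]
  have hcomp : HasDerivWithinAt (fun x => β (φ x)) ((1:ℝ) • b') (Set.Ici 0) 0 :=
    hβd'.scomp 0 hφd hbij.mapsTo
  have hcomp2 : HasDerivWithinAt (fun x => β (φ x)) (lam * b') (Set.Ici 0) 0 :=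
    ((hβd.const_mul lam).congr (fun x hx => heq x hx) (heq 0 le_rfl))
  have huniq : (1:ℝ) • b' = lam * b' := (hcomp.derivWithin hu).symm.trans (hcomp2.derivWithin hu)
  have : b' = lam * b' := by simpa using huniq
  have h2 : (lam - 1) * b' = 0 := by linear_combination -this
  rcases mul_eq_zero.1 h2 with h' | h'
  · exact absurd (sub_eq_zero.1 h') hlam1
  · exact h'
end

section
/- For n ∈ ℕ, the n-th derivative of a composition β∘φ of smooth functions can be written as (β∘φ)^{(n)}(x) = (φ'(x))^n · β^{(n)}(φ(x)) + Σ_{k=1}^{n-1} Φ_{n,k}(x) · β^{(k)}(φ(x)), where each Φ_{n,k} is an integral polynomial in φ'(x), φ''(x), …, φ^{(n)}(x) without constant term and containing no monomial purely in φ'(x). -/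
open Set MvPolynomial

noncomputable def Dop {m : ℕ} (P : MvPolynomial (Fin m) ℤ) : MvPolynomial (Fin (m+1)) ℤ :=
  ∑ i : Fin m, (rename Fin.castSucc (pderiv i P)) * X i.succ

lemma Dop_C {m : ℕ} (a : ℤ) : Dop (m := m) (C a) = 0 := by
  simp [Dop]

lemma Dop_add {m : ℕ} (P Q : MvPolynomial (Fin m) ℤ) : Dop (P + Q) = Dop P + Dop Q := by
  simp [Dop, mul_add, add_mul, Finset.sum_add_distrib]

lemma Dop_mul_X {m : ℕ} (P : MvPolynomial (Fin m) ℤ) (j : Fin m) :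
    Dop (P * X j) = Dop P * X (Fin.castSucc j) + rename Fin.castSucc P * X j.succ := by
  classical
  simp only [Dop, map_mul, pderiv_mul, pderiv_X, map_add, add_mul, Finset.sum_add_distrib,
    Finset.sum_mul]
  congr 1
  · apply Finset.sum_congr rfl
    intro i _
    rw [rename_X]; ring
  · rw [Finset.sum_eq_single j]
    · simp
    · intro i _ hij
      simp [Pi.single_apply, hij]
    · simp

lemma eval_rename_castSucc {m : ℕ} (φ : ℝ → ℝ) (x : ℝ) (P : MvPolynomial (Fin m) ℤ) :
    aeval (fun i : Fin (m+1) => iteratedDeriv ((i : ℕ)+1) φ x) (rename Fin.castSucc P)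
      = aeval (fun i : Fin m => iteratedDeriv ((i : ℕ)+1) φ x) P := by
  rw [aeval_rename]
  rfl

lemma hasDerivAt_iteratedDeriv {F : Type*} [NormedAddCommGroup F] [NormedSpace ℝ F]
    {φ : ℝ → F} (hφ : ContDiff ℝ (⊤ : ℕ∞) φ) (m : ℕ) (x : ℝ) :
    HasDerivAt (iteratedDeriv m φ) (iteratedDeriv (m+1) φ x) x := by
  have h := (hφ.differentiable_iteratedDeriv m (by exact_mod_cast lt_top_iff_ne_top.2 (by simp))) x
  have := h.hasDerivAt
  rwa [iteratedDeriv_succ]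

lemma hasDerivAt_aeval_iter {m : ℕ} {φ : ℝ → ℝ} (hφ : ContDiff ℝ (⊤ : ℕ∞) φ)
    (P : MvPolynomial (Fin m) ℤ) (x : ℝ) :
    HasDerivAt (fun y => aeval (fun i : Fin m => iteratedDeriv ((i : ℕ)+1) φ y) P)
      (aeval (fun i : Fin (m+1) => iteratedDeriv ((i : ℕ)+1) φ x) (Dop P)) x := by
  induction P using MvPolynomial.induction_on with
  | C a =>
      simp only [Dop_C, map_zero, aeval_C]
      exact hasDerivAt_const x _
  | add p q hp hq =>
      simp only [Dop_add, map_add]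
      exact hp.add hq
  | mul_X p j hp =>
      have hX : HasDerivAt (fun y => iteratedDeriv ((j : ℕ)+1) φ y)
          (iteratedDeriv ((j : ℕ)+2) φ x) x := hasDerivAt_iteratedDeriv hφ _ x
      have := hp.fun_mul hX
      simp only [Dop_mul_X, map_add, map_mul, aeval_X, eval_rename_castSucc]
      exact this

lemma comp_hasDerivAt {φ : ℝ → ℝ} {β : ℝ → ℂ} (hφ : ContDiff ℝ (⊤ : ℕ∞) φ) (hβ : ContDiff ℝ (⊤ : ℕ∞) β)
    (k : ℕ) (x : ℝ) :
    HasDerivAt (fun y => iteratedDeriv k β (φ y))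
      (((deriv φ x : ℝ) : ℂ) * iteratedDeriv (k+1) β (φ x)) x := by
  have h1 := hasDerivAt_iteratedDeriv hβ k (φ x)
  have h2 : HasDerivAt φ (deriv φ x) x := ((hφ.differentiable (by simp)) x).hasDerivAt
  have := h1.scomp x h2
  simpa [Complex.real_smul, Function.comp_def] using this

theorem stmt7 (n : ℕ) (hn : 1 ≤ n) :
    ∃ Φ : ℕ → MvPolynomial (Fin n) ℤ,
      (∀ k ∈ Finset.Icc 1 (n - 1), ∀ d ∈ (Φ k).support, ∃ i : Fin n, 0 < (i : ℕ) ∧ d i ≠ 0) ∧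
      ∀ (φ : ℝ → ℝ) (β : ℝ → ℂ), ContDiff ℝ (⊤ : ℕ∞) φ → ContDiff ℝ (⊤ : ℕ∞) β → ∀ x : ℝ,
        iteratedDeriv n (β ∘ φ) x
          = ((deriv φ x : ℝ) : ℂ) ^ n * iteratedDeriv n β (φ x)
            + ∑ k ∈ Finset.Icc 1 (n - 1),
                ((MvPolynomial.aeval (fun i : Fin n => iteratedDeriv ((i : ℕ) + 1) φ x)
                    (Φ k) : ℝ) : ℂ) * iteratedDeriv k β (φ x) := by
  induction n, hn using Nat.le_induction with
  | base =>
      refine ⟨fun _ => 0, by simp, fun φ β hφ hβ x => ?_⟩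
      have h := (comp_hasDerivAt hφ hβ 0 x)
      simp only [iteratedDeriv_zero] at h
      rw [iteratedDeriv_one, show β ∘ φ = fun y => β (φ y) from rfl, h.deriv]
      simp
  | succ n hn IH =>
      classical
      obtain ⟨Φ, hsupp, hform⟩ := IH
      set v0 : Fin (n+1) := ⟨0, by omega⟩ with hv0
      set v1 : Fin (n+1) := ⟨1, by omega⟩ with hv1
      refine ⟨fun k =>
        (if k ∈ Finset.Icc 1 (n-1) then Dop (Φ k) else 0)
        + (if k ∈ Finset.Icc 2 n then X v0 * rename Fin.castSucc (Φ (k-1)) else 0)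
        + (if k = n then C (n : ℤ) * X v0 ^ (n-1) * X v1 else 0), ?_, ?_⟩
      · -- structural property
        intro k hk d hd
        simp only [Nat.add_sub_cancel] at hk
        have := MvPolynomial.support_add hd
        rcases Finset.mem_union.1 this with h | h
        · have := MvPolynomial.support_add h
          rcases Finset.mem_union.1 this with h' | h'
          · -- Dop part
            split_ifs at h' with hc
            · rw [Dop] at h'
              have := MvPolynomial.support_sum h'
              rcases Finset.mem_biUnion.1 this with ⟨i, -, hi⟩
              have := MvPolynomial.support_mul _ _ hi
              rcases Finset.mem_add.1 this with ⟨d1, hd1, d2, hd2, rfl⟩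
              rw [MvPolynomial.support_X] at hd2
              rcases Finset.mem_singleton.1 hd2 with rfl
              refine ⟨i.succ, by simp [Fin.val_succ], ?_⟩
              simp [Finsupp.single_apply]
            · simp at h'
          · -- X v0 * rename part
            split_ifs at h' with hc
            · have := MvPolynomial.support_mul _ _ h'
              rcases Finset.mem_add.1 this with ⟨d1, hd1, d2, hd2, rfl⟩
              rw [MvPolynomial.support_rename_of_injective (Fin.castSucc_injective n)] at hd2
              rcases Finset.mem_image.1 hd2 with ⟨d', hd', rfl⟩
              simp only [Finset.mem_Icc] at hc
              have hk1 : k - 1 ∈ Finset.Icc 1 (n-1) := by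
                simp only [Finset.mem_Icc]; omega
              obtain ⟨i, hi0, hine⟩ := hsupp (k-1) hk1 d' hd'
              refine ⟨Fin.castSucc i, by simpa using hi0, ?_⟩
              have : Finsupp.mapDomain Fin.castSucc d' (Fin.castSucc i) = d' i :=
                Finsupp.mapDomain_apply (Fin.castSucc_injective n) d' i
              simp only [Finsupp.add_apply, this]
              omega
            · simp at h'
        · -- monomial part
          split_ifs at h with hc
          · have h2 := MvPolynomial.support_mul _ _ h
            rcases Finset.mem_add.1 h2 with ⟨d1, hd1, d2, hd2, rfl⟩
            rw [MvPolynomial.support_X] at hd2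
            rcases Finset.mem_singleton.1 hd2 with rfl
            refine ⟨v1, by simp [hv1], ?_⟩
            simp [Finsupp.single_apply]
          · simp at h
      · -- analytic formula
        intro φ β hφ hβ x
        have hRHS : iteratedDeriv n (β ∘ φ) = fun y =>
            ((deriv φ y : ℝ) : ℂ) ^ n * iteratedDeriv n β (φ y)
            + ∑ k ∈ Finset.Icc 1 (n - 1),
                ((aeval (fun i : Fin n => iteratedDeriv ((i : ℕ) + 1) φ y)
                    (Φ k) : ℝ) : ℂ) * iteratedDeriv k β (φ y) := by
          funext y; exact hform φ β hφ hβ y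
        -- derivative of first term
        have hφ' : HasDerivAt (fun y => ((deriv φ y : ℝ) : ℂ))
            ((iteratedDeriv 2 φ x : ℝ) : ℂ) x := by
          have := hasDerivAt_iteratedDeriv hφ 1 x
          rw [iteratedDeriv_one] at this
          exact this.ofReal_comp
        have h1 : HasDerivAt (fun y => ((deriv φ y : ℝ) : ℂ) ^ n * iteratedDeriv n β (φ y))
            (((n : ℂ) * ((deriv φ x : ℝ) : ℂ) ^ (n-1) * ((iteratedDeriv 2 φ x : ℝ) : ℂ))
                * iteratedDeriv n β (φ x)
              + ((deriv φ x : ℝ) : ℂ) ^ n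
                * (((deriv φ x : ℝ) : ℂ) * iteratedDeriv (n+1) β (φ x))) x := by
          have hpow : HasDerivAt (fun y => ((deriv φ y : ℝ) : ℂ) ^ n)
              ((n : ℂ) * ((deriv φ x : ℝ) : ℂ) ^ (n-1) * ((iteratedDeriv 2 φ x : ℝ) : ℂ)) x := by
            have := (hasDerivAt_pow n (((deriv φ x : ℝ) : ℂ))).comp x hφ'
            simpa [Function.comp_def] using this
          exact hpow.mul (comp_hasDerivAt hφ hβ n x)
        have h2 : ∀ k ∈ Finset.Icc 1 (n-1),
            HasDerivAt (fun y =>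
              ((aeval (fun i : Fin n => iteratedDeriv ((i : ℕ) + 1) φ y) (Φ k) : ℝ) : ℂ)
                * iteratedDeriv k β (φ y))
              (((aeval (fun i : Fin (n+1) => iteratedDeriv ((i : ℕ) + 1) φ x) (Dop (Φ k)) : ℝ) : ℂ)
                  * iteratedDeriv k β (φ x)
                + ((aeval (fun i : Fin n => iteratedDeriv ((i : ℕ) + 1) φ x) (Φ k) : ℝ) : ℂ)
                  * (((deriv φ x : ℝ) : ℂ) * iteratedDeriv (k+1) β (φ x))) x := by
          intro k _
          exact ((hasDerivAt_aeval_iter hφ (Φ k) x).ofReal_comp).mul (comp_hasDerivAt hφ hβ k x)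
        have hD := h1.fun_add (HasDerivAt.fun_sum h2)
        rw [iteratedDeriv_succ, hRHS, hD.deriv]
        -- now prove the algebraic identity
        have e1 : Finset.Icc 1 n ∩ Finset.Icc 1 (n-1) = Finset.Icc 1 (n-1) := by
          ext k; simp only [Finset.mem_inter, Finset.mem_Icc]; omega
        have e2 : Finset.Icc 1 n ∩ Finset.Icc 2 n = Finset.Icc 2 n := by
          ext k; simp only [Finset.mem_inter, Finset.mem_Icc]; omega
        have e3 : Finset.Icc 2 n = Finset.map (addRightEmbedding 1) (Finset.Icc 1 (n-1)) := by
          rw [Finset.map_add_right_Icc]; congr 1; omega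
        simp only [hv0, hv1, Fin.val_mk, Nat.add_sub_cancel, map_add, map_mul, map_pow, aeval_X, aeval_C,
          apply_ite (aeval (fun i : Fin (n+1) => iteratedDeriv ((i : ℕ) + 1) φ x)), map_zero,
          eval_rename_castSucc, apply_ite Complex.ofReal, Complex.ofReal_zero,
          Complex.ofReal_add, Complex.ofReal_mul, Complex.ofReal_pow, Complex.ofReal_intCast,
          algebraMap_int_eq, eq_intCast, Int.cast_natCast, zero_add, iteratedDeriv_one]
        simp only [add_mul, ite_mul, zero_mul, Finset.sum_add_distrib, Finset.sum_ite_mem,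
          Finset.sum_ite_eq', e1, e2]
        rw [e3, Finset.sum_map]
        simp only [addRightEmbedding_apply, Nat.add_sub_cancel]
        rw [if_pos (by simp only [Finset.mem_Icc]; omega : n ∈ Finset.Icc 1 n)]
        have e4 : ∑ k ∈ Finset.Icc 1 (n-1),
              ((deriv φ x : ℝ) : ℂ)
                * ((aeval (fun i : Fin n => iteratedDeriv ((i : ℕ) + 1) φ x) (Φ k) : ℝ) : ℂ)
                * iteratedDeriv (k+1) β (φ x)
            = ∑ k ∈ Finset.Icc 1 (n-1),
              ((aeval (fun i : Fin n => iteratedDeriv ((i : ℕ) + 1) φ x) (Φ k) : ℝ) : ℂ)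
                * (((deriv φ x : ℝ) : ℂ) * iteratedDeriv (k+1) β (φ x)) :=
          Finset.sum_congr rfl fun k _ => by ring
        rw [e4]
        simp only [map_intCast, map_natCast, Int.cast_natCast, Complex.ofReal_natCast,
          show (1+1) = 2 from rfl]
        ring
end

section
/- Let 𝒮 be the space of pairs (β₁, β₂) of smooth functions on (0,∞) with β₁∘φ = λβ₁ and β₂∘φ = λβ₂ + β₁, and 𝒵 the space of smooth solutions of β∘φ = λβ on (0,∞). Then the projection P₁ : 𝒮 → 𝒵, (β₁,β₂) ↦ β₁, is a surjective linear map with kernel {(0, β) : β ∈ 𝒵} ≅ 𝒵, so there is a short exact sequence 0 → 𝒵 → 𝒮 → 𝒵 → 0 of complex vector spaces. -/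
open Set

open scoped ContDiff

lemma exists_log_aux (φ : ℝ → ℝ) (hφs : ContDiffOn ℝ (⊤ : ℕ∞) φ (Set.Ioi 0))
    (hmap : Set.MapsTo φ (Set.Ioi 0) (Set.Ioi 0))
    (lam : ℂ) (hlam0 : lam ≠ 0)
    (βs : ℝ → ℂ) (hβs : ContDiffOn ℝ (⊤ : ℕ∞) βs (Set.Ioi 0))
    (hne : ∀ x > (0:ℝ), βs x ≠ 0)
    (heqs : ∀ x > (0:ℝ), βs (φ x) = lam * βs x) :
    ∃ (g : ℝ → ℂ) (c : ℂ), ContDiffOn ℝ (⊤ : ℕ∞) g (Set.Ioi 0) ∧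
      (∀ x > (0:ℝ), g (φ x) = g x + c) ∧ Complex.exp c = lam := by
  have hop : IsOpen (Set.Ioi (0:ℝ)) := isOpen_Ioi
  have h1 : (1:ℝ) ∈ Set.Ioi (0:ℝ) := by norm_num
  -- basic differentiability facts
  have hβsdiff : DifferentiableOn ℝ βs (Set.Ioi 0) := hβs.differentiableOn (by simp)
  have hβsAt : ∀ x ∈ Set.Ioi (0:ℝ), HasDerivAt βs (deriv βs x) x := by
    intro x hx
    exact ((hβsdiff x hx).differentiableAt (hop.mem_nhds hx)).hasDerivAt
  have hderiv_cont : ContinuousOn (deriv βs) (Set.Ioi 0) :=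
    (hβs.deriv_of_isOpen (m := 0) hop (by simp)).continuousOn
  set D : ℝ → ℂ := fun t => deriv βs t / βs t with hD
  have hDcont : ContinuousOn D (Set.Ioi 0) :=
    hderiv_cont.div hβs.continuousOn (fun x hx => hne x hx)
  set g : ℝ → ℂ := fun x => Complex.log (βs 1) + ∫ t in (1:ℝ)..x, D t with hg
  -- derivative of g
  have hgAt : ∀ x ∈ Set.Ioi (0:ℝ), HasDerivAt g (D x) x := by
    intro x hx
    have hsub : Set.uIcc (1:ℝ) x ⊆ Set.Ioi 0 := by
      intro t ht
      rcases Set.mem_uIcc.1 ht with h | h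
      · exact lt_of_lt_of_le one_pos h.1
      · exact lt_of_lt_of_le hx h.1
    have hint : IntervalIntegrable D MeasureTheory.volume 1 x :=
      (hDcont.mono hsub).intervalIntegrable
    have hmeas : StronglyMeasurableAtFilter D (nhds x) MeasureTheory.volume :=
      ContinuousOn.stronglyMeasurableAtFilter hop hDcont x hx
    have := intervalIntegral.integral_hasDerivAt_right hint hmeas
      (hDcont.continuousAt (hop.mem_nhds hx))
    exact this.const_add _
  -- exp g = βs on Ioi 0
  have hexpg : ∀ x ∈ Set.Ioi (0:ℝ), Complex.exp (g x) = βs x := by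
    set F : ℝ → ℂ := fun x => βs x * Complex.exp (-g x) with hF
    have hFAt : ∀ x ∈ Set.Ioi (0:ℝ), HasDerivAt F 0 x := by
      intro x hx
      have h1 := hβsAt x hx
      have h2 : HasDerivAt (fun y => Complex.exp (-g y)) (Complex.exp (-g x) * (-D x)) x :=
        ((hgAt x hx).neg).cexp
      have := h1.mul h2
      convert this using 1
      have hbne := hne x hx
      · rfl
      · rfl
      show (0:ℂ) = deriv βs x * Complex.exp (-g x) + βs x * (Complex.exp (-g x) * -(deriv βs x / βs x))
      have hbne := hne x hx
      field_simp
      ring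
    have hFdiff : DifferentiableOn ℝ F (Set.Ioi 0) :=
      fun x hx => ((hFAt x hx).differentiableAt).differentiableWithinAt
    have hconst : ∀ x ∈ Set.Ioi (0:ℝ), F x = F 1 := by
      intro x hx
      refine (convex_Ioi (0:ℝ)).is_const_of_fderivWithin_eq_zero hFdiff ?_ hx h1
      intro y hy
      rw [fderivWithin_of_isOpen hop hy, (hFAt y hy).hasFDerivAt.fderiv]
      ext t
      simp
    intro x hx
    have hx1 : βs x * Complex.exp (-g x) = 1 := by
      have hF1 : F 1 = 1 := by
        have hg1 : g 1 = Complex.log (βs 1) := by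
          show Complex.log (βs 1) + ∫ t in (1:ℝ)..(1:ℝ), D t = _
          rw [intervalIntegral.integral_same, add_zero]
        show βs 1 * Complex.exp (-g 1) = 1
        rw [hg1, Complex.exp_neg, Complex.exp_log (hne 1 one_pos),
          mul_inv_cancel₀ (hne 1 one_pos)]
      exact (hconst x hx).trans hF1
    have hbne := hne x hx
    rw [Complex.exp_neg, mul_inv_eq_one₀ (Complex.exp_ne_zero _)] at hx1
    exact hx1.symm
  -- g ∘ φ = g + c
  have hφdiff : DifferentiableOn ℝ φ (Set.Ioi 0) := hφs.differentiableOn (by simp)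
  have hφAt : ∀ x ∈ Set.Ioi (0:ℝ), HasDerivAt φ (deriv φ x) x := by
    intro x hx
    exact ((hφdiff x hx).differentiableAt (hop.mem_nhds hx)).hasDerivAt
  set k : ℝ → ℂ := fun x => g (φ x) - g x with hk
  have hkAt : ∀ x ∈ Set.Ioi (0:ℝ), HasDerivAt k 0 x := by
    intro x hx
    have hφx : φ x ∈ Set.Ioi (0:ℝ) := hmap hx
    have hcomp := (hgAt (φ x) hφx).scomp x (hφAt x hx)
    -- chain rule identity
    have hkey : (deriv φ x : ℝ) • deriv βs (φ x) = lam * deriv βs x := by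
      have hc1 := (hβsAt (φ x) hφx).scomp x (hφAt x hx)
      have hc2 : HasDerivAt (fun y => βs (φ y)) (lam * deriv βs x) x := by
        have hev : (fun y => lam * βs y) =ᶠ[nhds x] fun y => βs (φ y) := by
          filter_upwards [hop.mem_nhds hx] with y hy
          exact (heqs y hy).symm
        exact ((hβsAt x hx).const_mul lam).congr_of_eventuallyEq hev.symm
      exact hc1.unique hc2
    have hkey' : (↑(deriv φ x) : ℂ) * deriv βs (φ x) = lam * deriv βs x := by
      rw [← Complex.real_smul]
      exact hkey
    have hDval : (deriv φ x : ℝ) • D (φ x) = D x := by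
      have hbx := hne x hx
      rw [Complex.real_smul]
      show (↑(deriv φ x) : ℂ) * (deriv βs (φ x) / βs (φ x)) = deriv βs x / βs x
      rw [heqs x hx, mul_div_assoc', hkey', mul_div_mul_left _ _ hlam0]
    have := hcomp.sub (hgAt x hx)
    rw [hDval, sub_self] at this
    exact this
  have hkdiff : DifferentiableOn ℝ k (Set.Ioi 0) :=
    fun x hx => ((hkAt x hx).differentiableAt).differentiableWithinAt
  have hkconst : ∀ x ∈ Set.Ioi (0:ℝ), k x = k 1 := by
    intro x hx
    refine (convex_Ioi (0:ℝ)).is_const_of_fderivWithin_eq_zero hkdiff ?_ hx h1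
    intro y hy
    rw [fderivWithin_of_isOpen hop hy, (hkAt y hy).hasFDerivAt.fderiv]
    ext t
    simp
  set c : ℂ := k 1 with hc
  have hgφ : ∀ x > (0:ℝ), g (φ x) = g x + c := by
    intro x hx
    have := hkconst x hx
    rw [hk] at this
    simp only at this
    linear_combination this
  have hec : Complex.exp c = lam := by
    have hφ1 : φ 1 ∈ Set.Ioi (0:ℝ) := hmap h1
    have : Complex.exp (g (φ 1) - g 1) = lam := by
      rw [Complex.exp_sub, hexpg (φ 1) hφ1, hexpg 1 h1, heqs 1 one_pos,
        mul_div_assoc, div_self (hne 1 one_pos), mul_one]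
    simpa [hc, hk] using this
  -- analyticity of g
  have hgcont : ContinuousOn g (Set.Ioi 0) :=
    fun x hx => ((hgAt x hx).continuousAt).continuousWithinAt
  have hgsm : ContDiffOn ℝ (⊤ : ℕ∞) g (Set.Ioi 0) := by
    have hDs : ContDiffOn ℝ (⊤ : ℕ∞) D (Set.Ioi 0) :=
      ((hβs.deriv_of_isOpen (m := (⊤ : ℕ∞)) hop (by simp)).mul
        (hβs.inv (fun x hx => hne x hx))).congr (fun x _ => by simp [hD, div_eq_mul_inv])
    rw [contDiffOn_infty_iff_deriv_of_isOpen hop]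
    refine ⟨fun x hx => (hgAt x hx).differentiableAt.differentiableWithinAt, ?_⟩
    exact hDs.congr (fun x hx => (hgAt x hx).deriv)
  exact ⟨g, c, hgsm, hgφ, hec⟩

theorem stmt10 (φ : ℝ → ℝ) (hφs : ContDiffOn ℝ (⊤ : ℕ∞) φ (Set.Ioi 0))
    (hbij : Set.BijOn φ (Set.Ioi 0) (Set.Ioi 0))
    (hexp : ∀ x > (0:ℝ), φ x > x)
    (lam : ℂ) (hlam : 1 < ‖lam‖)
    (βs : ℝ → ℂ) (hβs : ContDiffOn ℝ (⊤ : ℕ∞) βs (Set.Ioi 0))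
    (hne : ∀ x > (0:ℝ), βs x ≠ 0)
    (heqs : ∀ x > (0:ℝ), βs (φ x) = lam * βs x) :
    let Z : Set (ℝ → ℂ) :=
      {β | ContDiffOn ℝ (⊤ : ℕ∞) β (Set.Ioi 0) ∧ ∀ x > (0:ℝ), β (φ x) = lam * β x}
    let S : Set ((ℝ → ℂ) × (ℝ → ℂ)) :=
      {p | ContDiffOn ℝ (⊤ : ℕ∞) p.1 (Set.Ioi 0) ∧ ContDiffOn ℝ (⊤ : ℕ∞) p.2 (Set.Ioi 0) ∧
        (∀ x > (0:ℝ), p.1 (φ x) = lam * p.1 x) ∧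
        ∀ x > (0:ℝ), p.2 (φ x) = lam * p.2 x + p.1 x}
    (∀ p ∈ S, p.1 ∈ Z) ∧
    (∀ β₁ ∈ Z, ∃ β₂ : ℝ → ℂ, (β₁, β₂) ∈ S) ∧
    (∀ β₂ : ℝ → ℂ, ((fun _ => (0:ℂ)), β₂) ∈ S ↔ β₂ ∈ Z) := by
  intro Z S
  have hlam0 : lam ≠ 0 := by
    intro h
    rw [h] at hlam
    norm_num at hlam
  refine ⟨?_, ?_, ?_⟩
  · rintro p ⟨h1, _, h3, _⟩
    exact ⟨h1, h3⟩
  · rintro β₁ ⟨hβ₁s, hβ₁e⟩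
    obtain ⟨g, c, hgsm, hgφ, hec⟩ :=
      exists_log_aux φ hφs hbij.mapsTo lam hlam0 βs hβs hne heqs
    have hc0 : c ≠ 0 := by
      intro h
      rw [h, Complex.exp_zero] at hec
      rw [← hec] at hlam
      norm_num at hlam
    refine ⟨fun x => β₁ x * g x / (lam * c), ⟨hβ₁s, ?_, hβ₁e, ?_⟩⟩
    · exact (hβ₁s.mul hgsm).div_const _
    · intro x hx
      simp only
      rw [hβ₁e x hx, hgφ x hx]
      field_simp
  · intro β₂
    constructor
    · rintro ⟨_, h2, _, h4⟩
      refine ⟨h2, fun x hx => ?_⟩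
      have := h4 x hx
      simpa using this
    · rintro ⟨h1, h2⟩
      exact ⟨contDiffOn_const, h1, by simp, fun x hx => by simp [h2 x hx]⟩
end

section
/- Let φ : ℝ → ℝ be a smooth diffeomorphism with φ(0) = 0 and φ'(0) = 1, and let h : ℝ → [0,1] be smooth with h ≡ 0 on (−∞, 1/3] and h ≡ 1 on [2/3, ∞). Define φ̃_δ(x) = h(−x/δ)·x + (1 − h(−x/δ))·φ(x) for x ≤ 0 and φ̃_δ(x) = h(x/δ)·(x + δ²) + (1 − h(x/δ))·φ(x) for x ≥ 0. Then Lip(φ̃_δ − id_ℝ) → 0 as δ → 0+; in particular, for small enough δ, φ̃_δ is a smooth diffeomorphism of ℝ agreeing with φ near 0, equal to the identity on (−∞, −δ], and equal to x ↦ x + δ² on [δ, ∞). -/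
open Set

theorem stmt15 (φ : ℝ → ℝ) (hφ : ContDiff ℝ (⊤ : ℕ∞) φ) (hbij : Function.Bijective φ)
    (hφ0 : φ 0 = 0) (hφ'0 : deriv φ 0 = 1)
    (h : ℝ → ℝ) (hh : ContDiff ℝ (⊤ : ℕ∞) h) (hrange : ∀ x, h x ∈ Set.Icc (0:ℝ) 1)
    (h0 : ∀ x ≤ (1/3 : ℝ), h x = 0) (h1 : ∀ x ≥ (2/3 : ℝ), h x = 1) :
    let Φ : ℝ → ℝ → ℝ := fun δ x =>
      if x ≤ 0 then h (-x / δ) * x + (1 - h (-x / δ)) * φ x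
      else h (x / δ) * (x + δ ^ 2) + (1 - h (x / δ)) * φ x
    (∀ ε > (0:ℝ), ∃ δ₀ > (0:ℝ), ∀ δ : ℝ, 0 < δ → δ < δ₀ →
        ∀ x y : ℝ, |(Φ δ x - x) - (Φ δ y - y)| ≤ ε * |x - y|) ∧
    ∃ δ₁ > (0:ℝ), ∀ δ : ℝ, 0 < δ → δ < δ₁ →
      Function.Bijective (Φ δ) ∧ ContDiff ℝ (⊤ : ℕ∞) (Φ δ) ∧
      (∃ ε > (0:ℝ), ∀ x : ℝ, |x| < ε → Φ δ x = φ x) ∧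
      (∀ x ≤ -δ, Φ δ x = x) ∧ (∀ x ≥ δ, Φ δ x = x + δ ^ 2) := by
  intro Φ
  have hΦdef : ∀ δ x : ℝ, Φ δ x = if x ≤ 0 then h (-x / δ) * x + (1 - h (-x / δ)) * φ x
      else h (x / δ) * (x + δ ^ 2) + (1 - h (x / δ)) * φ x := fun δ x => rfl
  -- derivative facts for g = φ - id
  have hgd : ∀ x : ℝ, HasDerivAt (fun x => φ x - x) (deriv φ x - 1) x := fun x =>
    ((hφ.differentiable (by simp) x).hasDerivAt).sub (hasDerivAt_id x)
  have hdφ : Continuous (deriv φ) := hφ.continuous_deriv (by simp)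
  -- deriv h vanishes off (1/3, 2/3)
  have hdh0 : ∀ t ≤ (1/3 : ℝ), deriv h t = 0 := by
    intro t ht
    have hmin : IsLocalMin h t := Filter.Eventually.of_forall fun y => by
      rw [h0 t ht]; exact (hrange y).1
    exact hmin.deriv_eq_zero
  have hdh1 : ∀ t ≥ (2/3 : ℝ), deriv h t = 0 := by
    intro t ht
    have hmax : IsLocalMax h t := Filter.Eventually.of_forall fun y => by
      rw [h1 t ht]; exact (hrange y).2
    exact hmax.deriv_eq_zero
  -- bound on deriv h
  obtain ⟨C, hC0, hC⟩ : ∃ C : ℝ, 0 ≤ C ∧ ∀ t, |deriv h t| ≤ C := by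
    obtain ⟨C₀, hC₀⟩ := (isCompact_Icc (a := (1/3 : ℝ)) (b := (2/3 : ℝ))).exists_bound_of_continuousOn
      ((hh.continuous_deriv (by simp)).continuousOn)
    refine ⟨max C₀ 0, le_max_right _ _, fun t => ?_⟩
    rcases le_or_gt t (1/3 : ℝ) with ht | ht
    · simp [hdh0 t ht]
    rcases le_or_gt (2/3 : ℝ) t with ht' | ht'
    · simp [hdh1 t ht']
    · have := hC₀ t ⟨ht.le, ht'.le⟩
      rw [Real.norm_eq_abs] at this
      exact this.trans (le_max_left _ _)
  -- Part 1 : the Lipschitz estimate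
  have key : ∀ ε > (0:ℝ), ∃ δ₀ > (0:ℝ), ∀ δ : ℝ, 0 < δ → δ < δ₀ →
      ∀ x y : ℝ, |(Φ δ x - x) - (Φ δ y - y)| ≤ ε * |x - y| := by
    intro ε hε
    have hC1 : (0:ℝ) < C + 1 := by linarith
    set ε' : ℝ := ε / (2 * (C + 1)) with hε'def
    have hε' : 0 < ε' := by positivity
    have hhalf : (C + 1) * ε' = ε / 2 := by
      rw [hε'def]; field_simp
    -- continuity of deriv φ at 0 gives smallness radius
    obtain ⟨r, hr, hrb⟩ : ∃ r > 0, ∀ t : ℝ, |t| < r → |deriv φ t - 1| < ε' := by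
      have hcont : ContinuousAt (fun t => deriv φ t - 1) 0 :=
        (hdφ.sub continuous_const).continuousAt
      obtain ⟨r, hr, hrb⟩ := Metric.continuousAt_iff.mp hcont ε' hε'
      refine ⟨r, hr, fun t ht => ?_⟩
      have := hrb (x := t) (by simpa [Real.dist_eq] using ht)
      simpa [Real.dist_eq, hφ'0] using this
    refine ⟨min r (ε / (2 * (C + 1))), by positivity, ?_⟩
    intro δ hδ hδ0
    have hδr : δ < r := lt_of_lt_of_le hδ0 (min_le_left _ _)
    have hδε : δ < ε / (2 * (C + 1)) := lt_of_lt_of_le hδ0 (min_le_right _ _)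
    have hCδ : C * δ ≤ ε / 2 := by
      nlinarith [mul_le_mul_of_nonneg_left hδε.le hC0]
    have hsmall : ∀ t : ℝ, |t| ≤ δ → |deriv φ t - 1| ≤ ε' := fun t ht =>
      (hrb t (lt_of_le_of_lt ht hδr)).le
    -- bound on g = φ - id on [-δ, δ]
    have gbound : ∀ x : ℝ, -δ ≤ x → x ≤ δ → |φ x - x| ≤ ε' * δ := by
      intro x hx1 hx2
      have hmem : ∀ z : ℝ, z ∈ Icc (-δ) δ → |z| ≤ δ := fun z hz => abs_le.mpr ⟨hz.1, hz.2⟩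
      have := Convex.norm_image_sub_le_of_norm_hasDerivWithin_le
        (f := fun x => φ x - x) (f' := fun x => deriv φ x - 1) (s := Icc (-δ) δ)
        (fun z _ => (hgd z).hasDerivWithinAt)
        (fun z hz => by simpa [Real.norm_eq_abs] using hsmall z (hmem z hz))
        (convex_Icc _ _) (x := 0) (y := x)
        ⟨by linarith, hδ.le⟩ ⟨hx1, hx2⟩
      rw [Real.norm_eq_abs, Real.norm_eq_abs] at this
      simp only [hφ0, sub_zero, sub_self] at this
      calc |φ x - x| ≤ ε' * |x| := this
        _ ≤ ε' * δ := by
            have : |x| ≤ δ := abs_le.mpr ⟨hx1, hx2⟩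
            nlinarith
    -- the two smooth pieces F₋ and F₊ with their derivatives
    set Fm : ℝ → ℝ := fun x => (1 - h (-x / δ)) * (φ x - x) with hFmdef
    set Fm' : ℝ → ℝ := fun x =>
      -(deriv h (-x / δ) * (-1 / δ)) * (φ x - x) + (1 - h (-x / δ)) * (deriv φ x - 1) with hFm'def
    set Fp : ℝ → ℝ := fun x => h (x / δ) * (δ ^ 2 - (φ x - x)) + (φ x - x) with hFpdef
    set Fp' : ℝ → ℝ := fun x =>
      deriv h (x / δ) * (1 / δ) * (δ ^ 2 - (φ x - x)) + (1 - h (x / δ)) * (deriv φ x - 1)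
      with hFp'def
    have hcompm : ∀ x : ℝ, HasDerivAt (fun x : ℝ => h (-x / δ)) (deriv h (-x / δ) * (-1 / δ)) x := by
      intro x
      have h1' : HasDerivAt (fun x : ℝ => -x / δ) (-1 / δ) x := by
        simpa using (hasDerivAt_id x).neg.div_const δ
      exact HasDerivAt.comp x ((hh.differentiable (by simp) (-x / δ)).hasDerivAt) h1'
    have hcompp : ∀ x : ℝ, HasDerivAt (fun x : ℝ => h (x / δ)) (deriv h (x / δ) * (1 / δ)) x := by
      intro x
      have h1' : HasDerivAt (fun x : ℝ => x / δ) (1 / δ) x := by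
        simpa using (hasDerivAt_id x).div_const δ
      exact HasDerivAt.comp x ((hh.differentiable (by simp) (x / δ)).hasDerivAt) h1'
    have hFmd : ∀ x : ℝ, HasDerivAt Fm (Fm' x) x := by
      intro x
      have := ((hasDerivAt_const x (1:ℝ)).sub (hcompm x)).mul (hgd x)
      refine this.congr_deriv ?_
      simp only [hFm'def, Pi.sub_apply]; ring
    have hFpd : ∀ x : ℝ, HasDerivAt Fp (Fp' x) x := by
      intro x
      have := ((hcompp x).mul ((hasDerivAt_const x (δ ^ 2)).sub (hgd x))).add (hgd x)
      refine this.congr_deriv ?_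
      simp only [hFp'def, Pi.sub_apply]; ring
    have hone : ∀ t : ℝ, |1 - h t| ≤ 1 := by
      intro t
      rw [abs_le]
      constructor <;> [linarith [(hrange t).2]; linarith [(hrange t).1]]
    -- bound for Fm' on Iic 0
    have hFm'b : ∀ x ∈ Iic (0:ℝ), |Fm' x| ≤ ε := by
      intro x hx
      simp only [mem_Iic] at hx
      by_cases hxδ : -δ ≤ x
      · have hb1 : |(-(deriv h (-x / δ) * (-1 / δ))) * (φ x - x)| ≤ (C * (1 / δ)) * (ε' * δ) := by
          rw [abs_mul, abs_neg, abs_mul]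
          have e1 : |(-1 / δ : ℝ)| = 1 / δ := by
            rw [abs_div, abs_neg, abs_one, abs_of_pos hδ]
          rw [e1]
          apply mul_le_mul (by apply mul_le_mul_of_nonneg_right (hC _) (by positivity))
            (gbound x hxδ (by linarith)) (abs_nonneg _) (by positivity)
        have hb2 : |(1 - h (-x / δ)) * (deriv φ x - 1)| ≤ ε' := by
          rw [abs_mul]
          calc |1 - h (-x / δ)| * |deriv φ x - 1| ≤ 1 * ε' := by
                apply mul_le_mul (hone _) (hsmall x (abs_le.mpr ⟨hxδ, by linarith⟩))
                  (abs_nonneg _) one_pos.le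
            _ = ε' := one_mul _
        have e2 : (C * (1 / δ)) * (ε' * δ) = C * ε' := by field_simp
        calc |Fm' x| ≤ (C * (1 / δ)) * (ε' * δ) + ε' := by
              simp only [hFm'def]
              exact (abs_add_le _ _).trans (add_le_add hb1 hb2)
          _ = (C + 1) * ε' := by rw [e2]; ring
          _ = ε / 2 := hhalf
          _ ≤ ε := by linarith
      · push_neg at hxδ
        have harg : (2/3 : ℝ) ≤ -x / δ := by
          rw [le_div_iff₀ hδ]
          nlinarith
        have : Fm' x = 0 := by
          simp [hFm'def, hdh1 _ harg, h1 _ harg]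
        rw [this]; simpa using hε.le
    -- bound for Fp' on Ici 0
    have hFp'b : ∀ x ∈ Ici (0:ℝ), |Fp' x| ≤ ε := by
      intro x hx
      simp only [mem_Ici] at hx
      by_cases hxδ : x ≤ δ
      · have hb1 : |deriv h (x / δ) * (1 / δ) * (δ ^ 2 - (φ x - x))| ≤
            (C * (1 / δ)) * (δ ^ 2 + ε' * δ) := by
          rw [abs_mul, abs_mul]
          have e1 : |(1 / δ : ℝ)| = 1 / δ := by rw [abs_div, abs_one, abs_of_pos hδ]
          rw [e1]
          apply mul_le_mul (by apply mul_le_mul_of_nonneg_right (hC _) (by positivity)) ?_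
            (abs_nonneg _) (by positivity)
          calc |δ ^ 2 - (φ x - x)| ≤ |δ ^ 2| + |φ x - x| := abs_sub _ _
            _ ≤ δ ^ 2 + ε' * δ := by
                have := gbound x (by linarith) hxδ
                have : |δ ^ 2| = δ ^ 2 := abs_of_nonneg (by positivity)
                nlinarith [gbound x (by linarith) hxδ]
        have hb2 : |(1 - h (x / δ)) * (deriv φ x - 1)| ≤ ε' := by
          rw [abs_mul]
          calc |1 - h (x / δ)| * |deriv φ x - 1| ≤ 1 * ε' := by
                apply mul_le_mul (hone _) (hsmall x (abs_le.mpr ⟨by linarith, hxδ⟩))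
                  (abs_nonneg _) one_pos.le
            _ = ε' := one_mul _
        have e2 : (C * (1 / δ)) * (δ ^ 2 + ε' * δ) = C * δ + C * ε' := by
          field_simp
        calc |Fp' x| ≤ (C * (1 / δ)) * (δ ^ 2 + ε' * δ) + ε' := by
              simp only [hFp'def]
              exact (abs_add_le _ _).trans (add_le_add hb1 hb2)
          _ = C * δ + ((C + 1) * ε') := by rw [e2]; ring
          _ ≤ ε / 2 + ε / 2 := by rw [hhalf]; linarith
          _ = ε := by ring
      · push_neg at hxδ
        have harg : (2/3 : ℝ) ≤ x / δ := by
          rw [le_div_iff₀ hδ]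
          nlinarith
        have : Fp' x = 0 := by
          simp [hFp'def, hdh1 _ harg, h1 _ harg]
        rw [this]; simpa using hε.le
    -- Lipschitz estimates on each half line
    have lipm : ∀ x ∈ Iic (0:ℝ), ∀ y ∈ Iic (0:ℝ), |Fm y - Fm x| ≤ ε * |y - x| := by
      intro x hx y hy
      have := Convex.norm_image_sub_le_of_norm_hasDerivWithin_le
        (f := Fm) (f' := Fm') (s := Iic 0)
        (fun z _ => (hFmd z).hasDerivWithinAt)
        (fun z hz => by simpa [Real.norm_eq_abs] using hFm'b z hz)
        (convex_Iic 0) hx hy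
      simpa [Real.norm_eq_abs] using this
    have lipp : ∀ x ∈ Ici (0:ℝ), ∀ y ∈ Ici (0:ℝ), |Fp y - Fp x| ≤ ε * |y - x| := by
      intro x hx y hy
      have := Convex.norm_image_sub_le_of_norm_hasDerivWithin_le
        (f := Fp) (f' := Fp') (s := Ici 0)
        (fun z _ => (hFpd z).hasDerivWithinAt)
        (fun z hz => by simpa [Real.norm_eq_abs] using hFp'b z hz)
        (convex_Ici 0) hx hy
      simpa [Real.norm_eq_abs] using this
    -- identification of Φ δ - id with the pieces
    have heqm : ∀ x : ℝ, x ≤ 0 → Φ δ x - x = Fm x := by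
      intro x hx
      rw [hΦdef, if_pos hx]
      simp only [hFmdef]; ring
    have heqp : ∀ x : ℝ, 0 ≤ x → Φ δ x - x = Fp x := by
      intro x hx
      rcases eq_or_lt_of_le hx with hx0 | hx0
      · have h00 : h (0:ℝ) = 0 := h0 0 (by norm_num)
        rw [← hx0, hΦdef]
        simp [hFpdef, h00, hφ0]
      · rw [hΦdef, if_neg (not_le.mpr hx0)]
        simp only [hFpdef]; ring
    have hFm0 : Fm 0 = 0 := by
      have h00 : h (0:ℝ) = 0 := h0 0 (by norm_num)
      simp [hFmdef, h00, hφ0]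
    have hFp0 : Fp 0 = 0 := by
      have h00 : h (0:ℝ) = 0 := h0 0 (by norm_num)
      simp [hFpdef, h00, hφ0]
    -- conclusion
    intro x y
    rcases le_or_gt x 0 with hx | hx <;> rcases le_or_gt y 0 with hy | hy
    · rw [heqm x hx, heqm y hy]
      have := lipm y (mem_Iic.mpr hy) x (mem_Iic.mpr hx)
      simpa [abs_sub_comm] using this
    · rw [heqm x hx, heqp y hy.le]
      have h1' : |Fm x| ≤ ε * |x| := by
        have := lipm 0 (mem_Iic.mpr le_rfl) x (mem_Iic.mpr hx)
        simpa [hFm0] using this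
      have h2' : |Fp y| ≤ ε * |y| := by
        have := lipp 0 (mem_Ici.mpr le_rfl) y (mem_Ici.mpr hy.le)
        simpa [hFp0] using this
      have hax : |x| = -x := abs_of_nonpos hx
      have hay : |y| = y := abs_of_pos hy
      have haxy : |x - y| = y - x := by rw [abs_sub_comm]; exact abs_of_pos (by linarith)
      calc |Fm x - Fp y| ≤ |Fm x| + |Fp y| := abs_sub _ _
        _ ≤ ε * |x| + ε * |y| := add_le_add h1' h2'
        _ = ε * |x - y| := by rw [hax, hay, haxy]; ring
    · rw [heqp x hx.le, heqm y hy]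
      have h1' : |Fp x| ≤ ε * |x| := by
        have := lipp 0 (mem_Ici.mpr le_rfl) x (mem_Ici.mpr hx.le)
        simpa [hFp0] using this
      have h2' : |Fm y| ≤ ε * |y| := by
        have := lipm 0 (mem_Iic.mpr le_rfl) y (mem_Iic.mpr hy)
        simpa [hFm0] using this
      have hax : |x| = x := abs_of_pos hx
      have hay : |y| = -y := abs_of_nonpos hy
      have haxy : |x - y| = x - y := abs_of_pos (by linarith)
      calc |Fp x - Fm y| ≤ |Fp x| + |Fm y| := abs_sub _ _
        _ ≤ ε * |x| + ε * |y| := add_le_add h1' h2'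
        _ = ε * |x - y| := by rw [hax, hay, haxy]; ring
    · rw [heqp x hx.le, heqp y hy.le]
      have := lipp y (mem_Ici.mpr hy.le) x (mem_Ici.mpr hx.le)
      simpa [abs_sub_comm] using this
  refine ⟨key, ?_⟩
  -- Part 2
  obtain ⟨δ₁, hδ₁, hlip⟩ := key (1/2) (by norm_num)
  refine ⟨δ₁, hδ₁, fun δ hδ hδ₁' => ?_⟩
  have hlipδ := hlip δ hδ hδ₁'
  -- boundary behaviour
  have hid : ∀ x ≤ -δ, Φ δ x = x := by
    intro x hx
    have hx0 : x ≤ 0 := le_trans hx (by linarith)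
    have harg : (2/3 : ℝ) ≤ -x / δ := by
      rw [le_div_iff₀ hδ]; nlinarith
    rw [hΦdef, if_pos hx0, h1 _ harg]
    ring
  have hplus : ∀ x ≥ δ, Φ δ x = x + δ ^ 2 := by
    intro x hx
    have hx0 : ¬ x ≤ 0 := by push_neg; linarith
    have harg : (2/3 : ℝ) ≤ x / δ := by
      rw [le_div_iff₀ hδ]; nlinarith
    rw [hΦdef, if_neg hx0, h1 _ harg]
    ring
  have hnear : ∀ x : ℝ, |x| < δ / 3 → Φ δ x = φ x := by
    intro x hx
    rcases le_or_gt x 0 with hx0 | hx0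
    · have harg : -x / δ ≤ 1/3 := by
        rw [div_le_iff₀ hδ]
        have := abs_le.mp hx.le
        nlinarith [this.1, this.2]
      rw [hΦdef, if_pos hx0, h0 _ harg]
      ring
    · have harg : x / δ ≤ 1/3 := by
        rw [div_le_iff₀ hδ]
        have := abs_le.mp hx.le
        nlinarith [this.1, this.2]
      rw [hΦdef, if_neg (not_le.mpr hx0), h0 _ harg]
      ring
  -- smoothness
  have hcA : ContDiff ℝ (⊤ : ℕ∞) (fun x : ℝ => h (-x / δ) * x + (1 - h (-x / δ)) * φ x) := by
    have hc : ContDiff ℝ (⊤ : ℕ∞) (fun x : ℝ => h (-x / δ)) :=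
      hh.comp (contDiff_id.neg.div_const δ)
    exact (hc.mul contDiff_id).add ((contDiff_const.sub hc).mul hφ)
  have hcB : ContDiff ℝ (⊤ : ℕ∞) (fun x : ℝ => h (x / δ) * (x + δ ^ 2) + (1 - h (x / δ)) * φ x) := by
    have hc : ContDiff ℝ (⊤ : ℕ∞) (fun x : ℝ => h (x / δ)) :=
      hh.comp (contDiff_id.div_const δ)
    exact (hc.mul (contDiff_id.add contDiff_const)).add ((contDiff_const.sub hc).mul hφ)
  have hsm : ContDiff ℝ (⊤ : ℕ∞) (Φ δ) := by
    rw [contDiff_iff_contDiffAt]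
    intro x
    rcases lt_trichotomy x 0 with hx | hx | hx
    · apply hcA.contDiffAt.congr_of_eventuallyEq
      filter_upwards [Iio_mem_nhds hx] with y hy
      rw [hΦdef, if_pos (le_of_lt hy)]
    · subst hx
      apply (hφ.contDiffAt).congr_of_eventuallyEq
      filter_upwards [Metric.ball_mem_nhds (0:ℝ) (by positivity : (0:ℝ) < δ / 3)] with y hy
      exact hnear y (by simpa [Real.dist_eq] using hy)
    · apply hcB.contDiffAt.congr_of_eventuallyEq
      filter_upwards [Ioi_mem_nhds hx] with y hy
      rw [hΦdef, if_neg (not_le.mpr hy)]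
  -- bijectivity
  have hmono : StrictMono (Φ δ) := by
    intro a b hab
    have e := hlipδ a b
    have habs : |a - b| = b - a := by
      rw [abs_sub_comm]; exact abs_of_pos (by linarith)
    rw [habs] at e
    have := (abs_le.mp e).2
    linarith
  have htop : Filter.Tendsto (Φ δ) Filter.atTop Filter.atTop := by
    apply Filter.Tendsto.congr'
      (f₁ := fun x : ℝ => x + δ ^ 2) ?_ ?_
    · filter_upwards [Filter.eventually_ge_atTop δ] with x hx
      exact (hplus x hx).symm
    · exact Filter.tendsto_atTop_add_const_right _ _ Filter.tendsto_id
  have hbot : Filter.Tendsto (Φ δ) Filter.atBot Filter.atBot := by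
    apply Filter.Tendsto.congr' (f₁ := fun x : ℝ => x) ?_ ?_
    · filter_upwards [Filter.eventually_le_atBot (-δ)] with x hx
      exact (hid x hx).symm
    · exact Filter.tendsto_id
  have hsur : Function.Surjective (Φ δ) := hsm.continuous.surjective htop hbot
  exact ⟨⟨hmono.injective, hsur⟩, hsm, ⟨δ / 3, by positivity, hnear⟩, hid, hplus⟩
end

section
/- Let φ ∈ Diff^∞([0,∞)) with φ(x) > x for x > 0 and φ'(0) = μ > 1, and let λ ∈ ℂ with μ < |λ|. If β : [0,∞) → ℂ is smooth and satisfies β(φ(x)) = λβ(x) for all x ≥ 0, then β(0) = 0 and lim_{x→0+} β'(x) = 0. -/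
open Set Filter

theorem stmt17 (φ : ℝ → ℝ) (hφs : ContDiffOn ℝ (⊤ : ℕ∞) φ (Set.Ici 0))
    (hbij : Set.BijOn φ (Set.Ici 0) (Set.Ici 0)) (hφ0 : φ 0 = 0)
    (hexp : ∀ x > (0:ℝ), φ x > x)
    (μ : ℝ) (hμ : 1 < μ) (hd : derivWithin φ (Set.Ici 0) 0 = μ)
    (lam : ℂ) (hlam : μ < ‖lam‖)
    (β : ℝ → ℂ) (hβ : ContDiffOn ℝ (⊤ : ℕ∞) β (Set.Ici 0))
    (heq : ∀ x ≥ (0:ℝ), β (φ x) = lam * β x) :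
    β 0 = 0 ∧
      Filter.Tendsto (fun x => derivWithin β (Set.Ici 0) x)
        (nhdsWithin 0 (Set.Ioi 0)) (nhds 0) := by
  have hU : UniqueDiffOn ℝ (Set.Ici (0:ℝ)) := uniqueDiffOn_Ici 0
  have h0 : (0:ℝ) ∈ Set.Ici (0:ℝ) := Set.mem_Ici.2 le_rfl
  have hμlam : (μ : ℂ) ≠ lam := by
    intro h
    rw [← h] at hlam
    simp [Complex.norm_real, abs_of_pos (lt_trans one_pos hμ)] at hlam
  -- β 0 = 0
  have hβ0 : β 0 = 0 := by
    have := heq 0 le_rfl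
    rw [hφ0] at this
    have hl1 : lam ≠ 1 := by
      intro h
      rw [h] at hlam
      simp at hlam
      linarith
    have : (1 - lam) * β 0 = 0 := by ring_nf; linear_combination this
    rcases mul_eq_zero.1 this with h | h
    · exact absurd (by linear_combination -h : lam = 1) hl1
    · exact h
  refine ⟨hβ0, ?_⟩
  -- derivatives
  set c := derivWithin β (Set.Ici 0) 0 with hc
  have hβd : HasDerivWithinAt β c (Set.Ici 0) 0 :=
    ((hβ.differentiableOn (by simp)) 0 h0).hasDerivWithinAt
  have hφd : HasDerivWithinAt φ μ (Set.Ici 0) 0 := by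
    have := ((hφs.differentiableOn (by simp)) 0 h0).hasDerivWithinAt
    rwa [hd] at this
  have hβd' : HasDerivWithinAt β c (Set.Ici 0) (φ 0) := by rwa [hφ0]
  have hcomp : HasDerivWithinAt (β ∘ φ) (μ • c) (Set.Ici 0) 0 :=
    hβd'.scomp 0 hφd hbij.mapsTo
  have hrhs : HasDerivWithinAt (fun x => lam * β x) (lam * c) (Set.Ici 0) 0 :=
    hβd.const_mul lam
  have hcongr : HasDerivWithinAt (β ∘ φ) (lam * c) (Set.Ici 0) 0 := by
    refine hrhs.congr (fun x hx => ?_) ?_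
    · simpa [Function.comp] using heq x hx
    · simpa [Function.comp] using heq 0 le_rfl
  have heqd : μ • c = lam * c := by
    have e1 := hcomp.derivWithin (hU 0 h0)
    have e2 := hcongr.derivWithin (hU 0 h0)
    rw [← e1, ← e2]
  have hc0 : c = 0 := by
    have : ((μ : ℂ) - lam) * c = 0 := by
      rw [sub_mul, ← heqd]
      simp [Complex.real_smul]
    rcases mul_eq_zero.1 this with h | h
    · exact absurd (by linear_combination h) hμlam
    · exact h
  -- continuity of derivWithin
  have hcont : ContinuousOn (fun x => derivWithin β (Set.Ici 0) x) (Set.Ici 0) := by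
    exact hβ.continuousOn_derivWithin hU (by simp)
  have ht := (hcont 0 h0).tendsto
  have : derivWithin β (Set.Ici 0) 0 = 0 := hc0
  rw [this] at ht
  exact ht.mono_left (nhdsWithin_mono 0 Set.Ioi_subset_Ici_self)
end

section
/- Let n ≥ 2 and a ∈ ℝ, and let X = (x^n + a·x^{2n-1})·d/dx on [0,∞) near 0. Then the time-one map exp(X) has Taylor expansion exp(X)(x) = x + x^n + (a + n/2)·x^{2n-1} + O(x^{2n}) at x = 0. -/
/-!
Fix a small `x > 0` and write `u(t) = ψ t x`. A fencing argument keeps `u` within distance `x`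
of `x` on `[0, 1]`, so `u = O(x)` uniformly in `t`. Integrating `u' = u^n + a u^(2n-1)` three
times, each time inserting the previous approximation into the right-hand side, gives uniformly
in `t ∈ [0, 1]`:
`u - x = O(x^n)`, then `u - x - t x^n = O(x^(2n-1))`, then
`u - x - t x^n - (a t + n t² / 2) x^(2n-1) = O(x^(3n-2))`,
where the term `n t²/2` integrates the cross term `n x^(n-1) (u - x) ≈ n t x^(2n-1)` of `u^n`.
Evaluate at `t = 1` and use `3n - 2 ≥ 2n`.
-/

open Set Asymptotics Filter Topology

theorem Filter.Tendsto.isBigO_pow_pow {α 𝕜 : Type*} [NormedField 𝕜] {l : Filter α} {X : α → 𝕜}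
    (hX : Tendsto X l (𝓝 0)) {m k : ℕ} (hmk : m ≤ k) :
    (fun b => X b ^ k) =O[l] fun b => X b ^ m := by
  rcases hmk.eq_or_lt with rfl | hlt
  · exact isBigO_refl _ _
  · exact (isLittleO_pow_pow hlt).isBigO.comp_tendsto hX

section PowSub

theorem sum_sub_pow_mul_pow_mul_sub {R : Type*} [CommRing R] (x y : R) (m : ℕ) :
    (∑ i ∈ Finset.range m, (x ^ i - y ^ i) * y ^ (m - 1 - i)) * (x - y)
      = x ^ m - y ^ m - m * y ^ (m - 1) * (x - y) := by
  have hdiag : ∑ i ∈ Finset.range m, y ^ i * y ^ (m - 1 - i) = m * y ^ (m - 1) := by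
    rw [Finset.sum_congr rfl fun i hi => by rw [← pow_add, Nat.add_sub_cancel' (by grind)]]
    simp
  simp only [sub_mul, Finset.sum_sub_distrib, hdiag, geom_sum₂_mul]

variable {α 𝕜 : Type*} [NormedField 𝕜] {l : Filter α} {f g h : α → 𝕜}

theorem Asymptotics.IsBigO.pow_sub_pow (hf : f =O[l] h) (hg : g =O[l] h) (m : ℕ) :
    (fun b => f b ^ m - g b ^ m) =O[l] fun b => h b ^ (m - 1) * (f b - g b) := by
  simp_rw [← geom_sum₂_mul]
  refine IsBigO.mul (IsBigO.fun_sum fun i hi => ?_) (isBigO_refl _ _)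
  have hexp : i + (m - 1 - i) = m - 1 := by grind
  simpa only [← pow_add, hexp] using (hf.pow i).mul (hg.pow (m - 1 - i))

theorem Asymptotics.IsBigO.pow_sub_pow_sub_mul (hf : f =O[l] h) (hg : g =O[l] h) (m : ℕ) :
    (fun b => f b ^ m - g b ^ m - m * g b ^ (m - 1) * (f b - g b)) =O[l]
      fun b => h b ^ (m - 2) * (f b - g b) ^ 2 := by
  simp_rw [← sum_sub_pow_mul_pow_mul_sub, sq, ← mul_assoc]
  refine IsBigO.mul (IsBigO.fun_sum fun i hi => ?_) (isBigO_refl _ _)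
  rcases Nat.eq_zero_or_pos i with rfl | hi0
  · simpa using isBigO_zero _ _
  have hexp : i - 1 + (m - 1 - i) = m - 2 := by grind
  simpa only [mul_right_comm _ (f _ - g _), ← pow_add, hexp] using
    (hf.pow_sub_pow hg i).mul (hg.pow (m - 1 - i))

end PowSub

section DerivativeBounds

variable {α E F : Type*} [NormedAddCommGroup E] [NormedSpace ℝ E] [NormedAddCommGroup F]

theorem isBigO_of_hasDerivAt_isBigO {l : Filter α} {T : ℝ} {w w' : α → ℝ → E} {g : α → F}
    (hw0 : ∀ᶠ x in l, w x 0 = 0)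
    (hw : ∀ᶠ x in l, ∀ t ∈ Icc 0 T, HasDerivAt (w x) (w' x t) t)
    (hw' : (fun p : α × ℝ => w' p.1 p.2) =O[l ×ˢ 𝓟 (Icc 0 T)] fun p => g p.1) :
    (fun p : α × ℝ => w p.1 p.2) =O[l ×ˢ 𝓟 (Icc 0 T)] fun p => g p.1 := by
  obtain ⟨C, hC, hCw'⟩ := hw'.exists_pos
  refine IsBigO.of_bound (C * T) ?_
  rw [IsBigOWith_def, eventually_prod_principal_iff] at hCw'
  rw [eventually_prod_principal_iff]
  filter_upwards [hw0, hw, hCw'] with x hx0 hxw hxC t ht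
  have hmvt := norm_image_sub_le_of_norm_deriv_le_segment'
    (fun s hs => (hxw s hs).hasDerivWithinAt) (fun s hs => hxC s (Ico_subset_Icc_self hs)) t ht
  rw [hx0, sub_zero, sub_zero] at hmvt
  calc ‖w x t‖ ≤ C * ‖g x‖ * t := hmvt
    _ ≤ C * ‖g x‖ * T := by gcongr; exact ht.2
    _ = C * T * ‖g x‖ := by ring

theorem norm_sub_le_mul_of_hasDerivAt_comp {u : ℝ → E} {ρ : E → E} {T r K : ℝ}
    (hK : 0 ≤ K) (hKr : K < r) (hu : ∀ t ∈ Icc 0 T, HasDerivAt u (ρ (u t)) t)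
    (hρ : ∀ y, ‖y - u 0‖ ≤ r * T → ‖ρ y‖ ≤ K) :
    ∀ t ∈ Icc 0 T, ‖u t - u 0‖ ≤ r * t := by
  refine image_norm_le_of_norm_deriv_right_lt_deriv_boundary
    (f := fun t => u t - u 0) (B := fun t => r * t) (B' := fun _ => r)
    (fun t ht => ((hu t ht).continuousAt.sub continuousAt_const).continuousWithinAt)
    (fun t ht => ((hu t (Ico_subset_Icc_self ht)).sub_const (u 0)).hasDerivWithinAt)
    (by simp) (fun t => by simpa using (hasDerivAt_id t).const_mul r) ?_
  intro t ht hut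
  refine (hρ _ ?_).trans_lt hKr
  rw [hut]
  exact mul_le_mul_of_nonneg_left ht.2.le (hK.trans hKr.le)

end DerivativeBounds

def SolvesTakensODE (n : ℕ) (a : ℝ) (ψ : ℝ → ℝ → ℝ) : Prop :=
  ∀ᶠ x in 𝓝[>] (0:ℝ), ψ 0 x = x ∧
    ∀ t ∈ Icc (0:ℝ) 1, HasDerivAt (fun s => ψ s x) (ψ t x ^ n + a * ψ t x ^ (2 * n - 1)) t

-- Big-O along this filter on pairs `(x, t)` means: as `x → 0⁺`, uniformly in `t ∈ [0, 1]`.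
local notation "𝓛" => SProd.sprod (𝓝[>] (0:ℝ)) (𝓟 (Icc (0:ℝ) 1))

theorem isBigO_fst_pow_fst_pow {m k : ℕ} (hmk : m ≤ k) :
    (fun p : ℝ × ℝ => p.1 ^ k) =O[𝓛] fun p : ℝ × ℝ => p.1 ^ m :=
  (tendsto_fst.mono_right nhdsWithin_le_nhds).isBigO_pow_pow hmk

namespace SolvesTakensODE

variable {n : ℕ} {a : ℝ} {ψ : ℝ → ℝ → ℝ}

theorem abs_sub_le (hn : 2 ≤ n) (hψ : SolvesTakensODE n a ψ) :
    ∀ᶠ x in 𝓝[>] (0:ℝ), ∀ t ∈ Icc (0:ℝ) 1, |ψ t x - x| ≤ x * t := by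
  have hsmall : ∀ᶠ x in 𝓝[>] (0:ℝ), (2 * x) ^ n + |a| * (2 * x) ^ (2 * n - 1) ≤ 2⁻¹ * |x| := by
    have hpow : ∀ k, 1 < k → (fun x : ℝ => (2 * x) ^ k) =o[𝓝 0] fun x => x := fun k hk => by
      simpa only [mul_pow, pow_one] using (isLittleO_pow_pow hk).const_mul_left ((2:ℝ) ^ k)
    have hlo := (hpow n (by omega)).add ((hpow (2 * n - 1) (by omega)).const_mul_left |a|)
    filter_upwards [nhdsWithin_le_nhds (hlo.def (by norm_num : (0:ℝ) < 2⁻¹))] with x hx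
    exact (le_abs_self _).trans hx
  filter_upwards [hψ, hsmall, self_mem_nhdsWithin] with x ⟨hx0, hxode⟩ hxs (hxpos : 0 < x)
  have hρ : ∀ y : ℝ, ‖y - ψ 0 x‖ ≤ x * 1 → ‖y ^ n + a * y ^ (2 * n - 1)‖ ≤ x / 2 := by
    intro y hy
    rw [hx0, mul_one, Real.norm_eq_abs] at hy
    have hy2 : |y| ≤ 2 * x := by
      linarith [abs_sub_abs_le_abs_sub y x, abs_of_pos hxpos]
    rw [abs_of_pos hxpos] at hxs
    calc ‖y ^ n + a * y ^ (2 * n - 1)‖ ≤ |y| ^ n + |a| * |y| ^ (2 * n - 1) := by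
          rw [Real.norm_eq_abs, ← abs_pow, ← abs_pow, ← abs_mul]
          exact abs_add_le _ _
      _ ≤ (2 * x) ^ n + |a| * (2 * x) ^ (2 * n - 1) := by gcongr
      _ ≤ x / 2 := by linarith
  have h := norm_sub_le_mul_of_hasDerivAt_comp (u := fun s => ψ s x) (half_pos hxpos).le
    (half_lt_self hxpos) hxode hρ
  simpa only [hx0, Real.norm_eq_abs] using h

theorem isBigO_fst (hn : 2 ≤ n) (hψ : SolvesTakensODE n a ψ) :
    (fun p : ℝ × ℝ => ψ p.2 p.1) =O[𝓛] fun p : ℝ × ℝ => p.1 := by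
  refine IsBigO.of_bound 2 ?_
  rw [eventually_prod_principal_iff]
  filter_upwards [hψ.abs_sub_le hn, self_mem_nhdsWithin] with x hx (hxpos : 0 < x) t ht
  rw [Real.norm_eq_abs, Real.norm_eq_abs, abs_of_pos hxpos]
  linarith [hx t ht, abs_sub_abs_le_abs_sub (ψ t x) x, abs_of_pos hxpos,
    mul_le_of_le_one_right hxpos.le ht.2]

theorem isBigO_sub (hn : 2 ≤ n) (hψ : SolvesTakensODE n a ψ) :
    (fun p : ℝ × ℝ => ψ p.2 p.1 - p.1) =O[𝓛] fun p : ℝ × ℝ => p.1 ^ n := by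
  have hU := hψ.isBigO_fst hn
  refine isBigO_of_hasDerivAt_isBigO (w := fun x t => ψ t x - x)
    (w' := fun x t => ψ t x ^ n + a * ψ t x ^ (2 * n - 1)) ?_ ?_ ?_
  · filter_upwards [hψ] with x hx
    simp [hx.1]
  · filter_upwards [hψ] with x hx t ht
    exact (hx.2 t ht).sub_const x
  · exact (hU.pow n).add
      (((hU.pow _).const_mul_left a).trans (isBigO_fst_pow_fst_pow (by omega)))

theorem isBigO_sub_sub_mul (hn : 2 ≤ n) (hψ : SolvesTakensODE n a ψ) :
    (fun p : ℝ × ℝ => ψ p.2 p.1 - p.1 - p.2 * p.1 ^ n)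
      =O[𝓛] fun p : ℝ × ℝ => p.1 ^ (2 * n - 1) := by
  have hU := hψ.isBigO_fst hn
  have hX : (fun p : ℝ × ℝ => p.1) =O[𝓛] fun p : ℝ × ℝ => p.1 := isBigO_refl _ _
  refine isBigO_of_hasDerivAt_isBigO (g := fun x => x ^ (2 * n - 1))
    (w := fun x t => ψ t x - x - t * x ^ n)
    (w' := fun x t => (ψ t x ^ n - x ^ n) + a * ψ t x ^ (2 * n - 1)) ?_ ?_ ?_
  · filter_upwards [hψ] with x hx
    simp [hx.1]
  · filter_upwards [hψ] with x hx t ht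
    exact (((hx.2 t ht).sub_const x).sub (hasDerivAt_mul_const (x ^ n))).congr_deriv (by ring)
  · have hexp : n - 1 + n = 2 * n - 1 := by omega
    refine IsBigO.add ?_ ((hU.pow _).const_mul_left a)
    exact ((hU.pow_sub_pow hX n).trans ((hX.pow _).mul (hψ.isBigO_sub hn))).congr_right
      fun p => by rw [← pow_add, hexp]

theorem isBigO_sub_expansion (hn : 2 ≤ n) (hψ : SolvesTakensODE n a ψ) :
    (fun p : ℝ × ℝ =>
        ψ p.2 p.1 - p.1 - p.2 * p.1 ^ n - (a * p.2 + n / 2 * p.2 ^ 2) * p.1 ^ (2 * n - 1))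
      =O[𝓛] fun p : ℝ × ℝ => p.1 ^ (3 * n - 2) := by
  have hU := hψ.isBigO_fst hn
  have hX : (fun p : ℝ × ℝ => p.1) =O[𝓛] fun p : ℝ × ℝ => p.1 := isBigO_refl _ _
  refine isBigO_of_hasDerivAt_isBigO (g := fun x => x ^ (3 * n - 2))
    (w := fun x t => ψ t x - x - t * x ^ n - (a * t + n / 2 * t ^ 2) * x ^ (2 * n - 1))
    (w' := fun x t => (ψ t x ^ n - x ^ n - n * x ^ (n - 1) * (ψ t x - x))
      + n * (x ^ (n - 1) * (ψ t x - x - t * x ^ n))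
      + a * (ψ t x ^ (2 * n - 1) - x ^ (2 * n - 1))) ?_ ?_ ?_
  · filter_upwards [hψ] with x hx
    simp [hx.1]
  · filter_upwards [hψ] with x hx t ht
    have hexp : x ^ (n - 1) * x ^ n = x ^ (2 * n - 1) := by rw [← pow_add]; congr 1; omega
    refine ((((hx.2 t ht).sub_const x).sub (hasDerivAt_mul_const (x ^ n))).sub
      ((((hasDerivAt_id t).const_mul a).add ((hasDerivAt_pow 2 t).const_mul ((n : ℝ) / 2))).mul_const
        (x ^ (2 * n - 1)))).congr_deriv ?_
    push_cast
    linear_combination (n * t) * hexp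
  · have e1 : n - 2 + n * 2 = 3 * n - 2 := by omega
    have e2 : n - 1 + (2 * n - 1) = 3 * n - 2 := by omega
    have e3 : 2 * n - 1 - 1 + n = 3 * n - 2 := by omega
    refine (IsBigO.add ?_ ?_).add ?_
    · exact ((hU.pow_sub_pow_sub_mul hX n).trans
        ((hX.pow _).mul ((hψ.isBigO_sub hn).pow 2))).congr_right
          fun p => by rw [← pow_mul, ← pow_add, e1]
    · exact (((hX.pow _).mul (hψ.isBigO_sub_sub_mul hn)).const_mul_left (n : ℝ)).congr_right
        fun p => by rw [← pow_add, e2]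
    · exact (((hU.pow_sub_pow hX _).trans
        ((hX.pow _).mul (hψ.isBigO_sub hn))).const_mul_left a).congr_right
          fun p => by rw [← pow_add, e3]

end SolvesTakensODE

theorem stmt19 (n : ℕ) (hn : 2 ≤ n) (a : ℝ) (x₀ : ℝ) (hx₀ : 0 < x₀)
    (ψ : ℝ → ℝ → ℝ)
    (hψ0 : ∀ x ∈ Set.Icc (0:ℝ) x₀, ψ 0 x = x)
    (hode : ∀ x ∈ Set.Icc (0:ℝ) x₀, ∀ t ∈ Set.Icc (0:ℝ) 1,
        HasDerivAt (fun s => ψ s x) ((ψ t x) ^ n + a * (ψ t x) ^ (2 * n - 1)) t) :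
    (fun x => ψ 1 x - (x + x ^ n + (a + n / 2) * x ^ (2 * n - 1)))
      =O[nhdsWithin 0 (Set.Ioi 0)] fun x => x ^ (2 * n) := by
  have hψ : SolvesTakensODE n a ψ := by
    filter_upwards [Ioo_mem_nhdsGT hx₀] with x hx
    exact ⟨hψ0 x (Ioo_subset_Icc_self hx), hode x (Ioo_subset_Icc_self hx)⟩
  have htime_one : Tendsto (fun x : ℝ => (x, (1:ℝ))) (𝓝[>] 0) 𝓛 :=
    tendsto_id.prodMk (tendsto_principal.2 (.of_forall fun _ => right_mem_Icc.2 zero_le_one))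
  have hexpansion := (hψ.isBigO_sub_expansion hn).comp_tendsto htime_one
  refine (hexpansion.trans ?_).congr_left fun x => ?_
  · exact (tendsto_nhdsWithin_of_tendsto_nhds tendsto_id).isBigO_pow_pow (by omega)
  · simp only [Function.comp_apply]
    ring
end
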